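/- arXiv:1706.02405 — 6 statements merged into one kernel-verified Lean document; each statement's English description precedes it below -/
import Mathlib

section
/- Let V, W₁, W₂ be finite-dimensional real inner product spaces, c, c̃ ∈ ℝ with (c,c̃) ∈ D(c,c̃), let A be a nonderogatory endomorphism of V, let ψ : V → ℝ be linear and ν : V → W₁, β : V → W₂ be linear maps, and suppose X ∈ End(V) is a solution of the system (⋆) { X + Xᵗ = νᵗν + βᵗβ + c̃·ψᵗψ ; X∘A + Aᵗ∘Xᵗ = βᵗβ − (c−c̃)·ψᵗψ }. Define S = ker ν ∩ ker β if (c,c̃) = (0,0) and S = ker ψ ∩ ker ν ∩ ker β otherwise. Then ker X = ker Xᵗ ⊆ S and A(ker X) ⊆ ker X. In particular, if no nonzero eigenvector of the complexification A^ℂ of A lies in the complexification S⊗ℂ of S (equivalently, ker(A^ℂ − αI) ∩ (S⊗ℂ) = {0} for every eigenvalue α ∈ ℂ of A^ℂ), then X is invertible. -/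
open scoped RealInnerProductSpace TensorProduct

variable {V W₁ W₂ : Type*}

/-- `νᵗν`, the symmetric endomorphism associated to a linear map `ν`. -/
noncomputable def gram [NormedAddCommGroup V] [InnerProductSpace ℝ V] [FiniteDimensional ℝ V]
    [NormedAddCommGroup W₁] [InnerProductSpace ℝ W₁] [FiniteDimensional ℝ W₁]
    (ν : V →ₗ[ℝ] W₁) : Module.End ℝ V :=
  LinearMap.adjoint ν ∘ₗ ν

/-- The system (⋆): `X + Xᵗ = νᵗν + βᵗβ + c̃·ψᵗψ` and
`X∘A + Aᵗ∘Xᵗ = βᵗβ − (c−c̃)·ψᵗψ`. -/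
noncomputable def SolvesSys [NormedAddCommGroup V] [InnerProductSpace ℝ V] [FiniteDimensional ℝ V]
    [NormedAddCommGroup W₁] [InnerProductSpace ℝ W₁] [FiniteDimensional ℝ W₁]
    [NormedAddCommGroup W₂] [InnerProductSpace ℝ W₂] [FiniteDimensional ℝ W₂]
    (c ct : ℝ) (A : Module.End ℝ V)
    (ψ : V →ₗ[ℝ] ℝ) (ν : V →ₗ[ℝ] W₁) (β : V →ₗ[ℝ] W₂) (X : Module.End ℝ V) : Prop :=
  X + LinearMap.adjoint X = gram ν + gram β + ct • gram ψ ∧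
  X * A + LinearMap.adjoint A * LinearMap.adjoint X = gram β - (c - ct) • gram ψ

/-!
For `u ∈ ker Xᵗ` both `⟪X u, u⟫` and `⟪X (A u), u⟫` vanish, so pairing the two equations of (⋆)
with `u` gives `‖νu‖² + ‖βu‖² + c̃ ψ(u)² = 0` and `‖βu‖² = (c - c̃) ψ(u)²`. Outside the excluded
region these force `νu = βu = 0` and, unless `(c, c̃) = (0, 0)`, `ψ u = 0`; substituting back
into (⋆) gives `X u = X (A u) = 0`. Hence `ker Xᵗ ⊆ ker X`, which is an equality for dimension
reasons, and `ker X` is an `A`-invariant subspace of `S`. If `X` were not injective, the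
complexification of `ker X` would be a nonzero `A^ℂ`-invariant subspace of `S ⊗ ℂ` and would
contain an eigenvector of `A^ℂ`.
-/

theorem eq_zero_of_linear_system_of_nonneg {c ct a b p : ℝ} (hD : ¬ (ct < 0 ∧ ct ≤ c ∧ c ≤ 0))
    (ha : 0 ≤ a) (hb : 0 ≤ b) (hp : 0 ≤ p)
    (h₁ : a + b + ct * p = 0) (h₂ : b - (c - ct) * p = 0) :
    a = 0 ∧ b = 0 ∧ (p = 0 ∨ c = 0 ∧ ct = 0) := by
  rcases hp.eq_or_lt with rfl | hp
  · exact ⟨by linarith, by linarith, .inl rfl⟩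
  have hct : ct ≤ 0 := nonpos_of_mul_nonpos_left (by linarith) hp
  have hcct : ct ≤ c := sub_nonneg.1 (nonneg_of_mul_nonneg_left (by linarith) hp)
  have hc : c ≤ 0 := nonpos_of_mul_nonpos_left (by linarith) hp
  obtain rfl : ct = 0 := by by_contra h; exact hD ⟨lt_of_le_of_ne hct h, hcct, hc⟩
  obtain rfl : c = 0 := le_antisymm hc hcct
  exact ⟨by linarith, by linarith, .inr ⟨rfl, rfl⟩⟩

theorem LinearMap.ker_eq_ker_adjoint_of_le {𝕜 E : Type*} [RCLike 𝕜] [NormedAddCommGroup E]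
    [InnerProductSpace 𝕜 E] [FiniteDimensional 𝕜 E] {T : E →ₗ[𝕜] E}
    (h : LinearMap.ker (LinearMap.adjoint T) ≤ LinearMap.ker T) :
    LinearMap.ker T = LinearMap.ker (LinearMap.adjoint T) := by
  refine (Submodule.eq_of_le_of_finrank_le h ?_).symm
  have := T.finrank_range_add_finrank_ker
  have := (LinearMap.range T).finrank_add_finrank_orthogonal
  rw [T.orthogonal_range] at this
  omega

theorem Submodule.baseChange_ne_bot {R A M : Type*} [CommRing R] [CommRing A] [Algebra R A]
    [Module.FaithfullyFlat R A] [AddCommGroup M] [Module R M] {p : Submodule R M} (hp : p ≠ ⊥) :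
    p.baseChange A ≠ ⊥ := by
  obtain ⟨u, hu, hu0⟩ := p.exists_mem_ne_zero_of_ne_bot hp
  exact (Submodule.ne_bot_iff _).2
    ⟨1 ⊗ₜ u, Submodule.tmul_mem_baseChange_of_mem 1 hu, by simpa using hu0⟩

theorem Submodule.baseChange_le_comap_baseChange {R A M : Type*} [CommSemiring R] [CommSemiring A]
    [Algebra R A] [AddCommMonoid M] [Module R M] {p : Submodule R M} {f : Module.End R M}
    (h : p ≤ p.comap f) : p.baseChange A ≤ (p.baseChange A).comap (f.baseChange A) := by
  rw [Submodule.baseChange_eq_span, Submodule.span_le]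
  rintro _ ⟨u, hu, rfl⟩
  exact Submodule.subset_span ⟨f u, h hu, rfl⟩

theorem Module.End.exists_not_disjoint_eigenspace {K V : Type*} [Field K] [IsAlgClosed K]
    [AddCommGroup V] [Module K V] [FiniteDimensional K V] {f : Module.End K V}
    {p : Submodule K V} (hp : p ≠ ⊥) (hf : p ≤ p.comap f) :
    ∃ μ, ¬ Disjoint (f.eigenspace μ) p := by
  have : Nontrivial p := Submodule.nontrivial_iff_ne_bot.2 hp
  obtain ⟨μ, hμ⟩ := Module.End.exists_eigenvalue (f.restrict hf)
  exact ⟨μ, fun h ↦ hμ (Module.End.eigenspace_restrict_eq_bot hf h)⟩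

section System

variable [NormedAddCommGroup V] [InnerProductSpace ℝ V] [FiniteDimensional ℝ V]
  [NormedAddCommGroup W₁] [InnerProductSpace ℝ W₁] [FiniteDimensional ℝ W₁]
  [NormedAddCommGroup W₂] [InnerProductSpace ℝ W₂] [FiniteDimensional ℝ W₂]

theorem gram_apply (ν : V →ₗ[ℝ] W₁) (u : V) : gram ν u = LinearMap.adjoint ν (ν u) := rfl

theorem inner_gram_apply_self (ν : V →ₗ[ℝ] W₁) (u : V) : ⟪gram ν u, u⟫ = ‖ν u‖ ^ 2 := by
  rw [gram_apply, LinearMap.adjoint_inner_left, real_inner_self_eq_norm_sq]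

variable {c ct : ℝ} {A : Module.End ℝ V} {ψ : V →ₗ[ℝ] ℝ} {ν : V →ₗ[ℝ] W₁} {β : V →ₗ[ℝ] W₂}
  {X : Module.End ℝ V} {u : V}

theorem SolvesSys.apply_eq_of_adjoint_apply_eq_zero (hX : SolvesSys c ct A ψ ν β X)
    (hu : LinearMap.adjoint X u = 0) :
    X u = gram ν u + gram β u + ct • gram ψ u ∧
      X (A u) = gram β u - (c - ct) • gram ψ u := by
  obtain ⟨h₁, h₂⟩ := hX
  constructor
  · simpa [hu] using LinearMap.congr_fun h₁ u
  · simpa [hu] using LinearMap.congr_fun h₂ u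

theorem SolvesSys.norm_sq_eq_of_adjoint_apply_eq_zero (hX : SolvesSys c ct A ψ ν β X)
    (hu : LinearMap.adjoint X u = 0) :
    ‖ν u‖ ^ 2 + ‖β u‖ ^ 2 + ct * ‖ψ u‖ ^ 2 = 0 ∧ ‖β u‖ ^ 2 - (c - ct) * ‖ψ u‖ ^ 2 = 0 := by
  have hXu : ∀ v, ⟪X v, u⟫ = 0 := fun v ↦ by
    rw [← LinearMap.adjoint_inner_right, hu, inner_zero_right]
  obtain ⟨e₁, e₂⟩ := hX.apply_eq_of_adjoint_apply_eq_zero hu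
  constructor
  · simpa [e₁, inner_add_left, real_inner_smul_left, inner_gram_apply_self] using hXu u
  · simpa [e₂, inner_sub_left, real_inner_smul_left, inner_gram_apply_self] using hXu (A u)

theorem SolvesSys.eq_zero_of_adjoint_apply_eq_zero (hX : SolvesSys c ct A ψ ν β X)
    (hD : ¬ (ct < 0 ∧ ct ≤ c ∧ c ≤ 0)) (hu : LinearMap.adjoint X u = 0) :
    ν u = 0 ∧ β u = 0 ∧ (ψ u = 0 ∨ c = 0 ∧ ct = 0) := by
  obtain ⟨e₁, e₂⟩ := hX.norm_sq_eq_of_adjoint_apply_eq_zero hu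
  obtain ⟨hν, hβ, hψ⟩ :=
    eq_zero_of_linear_system_of_nonneg hD (by positivity) (by positivity) (by positivity) e₁ e₂
  simp only [sq_eq_zero_iff, norm_eq_zero] at hν hβ hψ
  exact ⟨hν, hβ, hψ⟩

theorem SolvesSys.ker_adjoint_le (hX : SolvesSys c ct A ψ ν β X)
    (hD : ¬ (ct < 0 ∧ ct ≤ c ∧ c ≤ 0)) :
    LinearMap.ker (LinearMap.adjoint X) ≤ LinearMap.ker X ⊓ (LinearMap.ker X).comap A := by
  intro u hu
  obtain ⟨e₁, e₂⟩ := hX.apply_eq_of_adjoint_apply_eq_zero hu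
  obtain ⟨hν, hβ, hψ⟩ := hX.eq_zero_of_adjoint_apply_eq_zero hD hu
  have hψ₀ : ct • gram ψ u = 0 ∧ (c - ct) • gram ψ u = 0 := by
    rcases hψ with h | ⟨rfl, rfl⟩
    · simp [gram_apply, h]
    · simp
  refine ⟨show X u = 0 from ?_, show X (A u) = 0 from ?_⟩
  · rw [e₁, hψ₀.1]
    simp [gram_apply, hν, hβ]
  · rw [e₂, hψ₀.2]
    simp [gram_apply, hβ]

end System

theorem stmt_1_general [NormedAddCommGroup V] [InnerProductSpace ℝ V] [FiniteDimensional ℝ V]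
    [NormedAddCommGroup W₁] [InnerProductSpace ℝ W₁] [FiniteDimensional ℝ W₁]
    [NormedAddCommGroup W₂] [InnerProductSpace ℝ W₂] [FiniteDimensional ℝ W₂]
    (c ct : ℝ) (hD : ¬ (ct < 0 ∧ ct ≤ c ∧ c ≤ 0))
    (A : Module.End ℝ V)
    (ψ : V →ₗ[ℝ] ℝ) (ν : V →ₗ[ℝ] W₁) (β : V →ₗ[ℝ] W₂)
    (X : Module.End ℝ V) (hX : SolvesSys c ct A ψ ν β X)
    (S : Submodule ℝ V)
    (hS : S = if c = 0 ∧ ct = 0 then LinearMap.ker ν ⊓ LinearMap.ker β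
      else LinearMap.ker ψ ⊓ LinearMap.ker ν ⊓ LinearMap.ker β) :
    LinearMap.ker X = LinearMap.ker (LinearMap.adjoint X) ∧
    LinearMap.ker X ≤ S ∧
    Submodule.map (A : V →ₗ[ℝ] V) (LinearMap.ker X) ≤ LinearMap.ker X ∧
    ((∀ μ : ℂ, Module.End.HasEigenvalue (LinearMap.baseChange ℂ (A : V →ₗ[ℝ] V)) μ →
        Module.End.eigenspace (LinearMap.baseChange ℂ (A : V →ₗ[ℝ] V)) μ ⊓
          Submodule.baseChange ℂ S = ⊥) →
      Function.Bijective X) := by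
  have hK := hX.ker_adjoint_le hD
  have hker : LinearMap.ker X = LinearMap.ker (LinearMap.adjoint X) :=
    LinearMap.ker_eq_ker_adjoint_of_le (hK.trans inf_le_left)
  have hinv : LinearMap.ker X ≤ (LinearMap.ker X).comap A := fun u hu ↦ (hK (hker ▸ hu)).2
  have hKS : LinearMap.ker X ≤ S := by
    intro u hu
    rw [hker] at hu
    obtain ⟨hν, hβ, hψ⟩ := hX.eq_zero_of_adjoint_apply_eq_zero hD hu
    subst hS
    split_ifs with hc
    · exact ⟨hν, hβ⟩
    · exact ⟨⟨hψ.resolve_right hc, hν⟩, hβ⟩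
  refine ⟨hker, hKS, Submodule.map_le_iff_le_comap.2 hinv, fun hspec ↦ ?_⟩
  have hinj : Function.Injective X := by
    rw [← LinearMap.ker_eq_bot]
    by_contra hne
    obtain ⟨μ, hμ⟩ := Module.End.exists_not_disjoint_eigenspace
      (Submodule.baseChange_ne_bot (A := ℂ) hne) (Submodule.baseChange_le_comap_baseChange hinv)
    have hμS := hspec μ <|
      Module.End.hasEigenvalue_iff.2 fun h ↦ hμ (h ▸ disjoint_bot_left)
    exact hμ <| disjoint_iff.2 <|
      eq_bot_mono (inf_le_inf_left _ (Submodule.baseChange_mono ℂ hKS)) hμS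
  exact ⟨hinj, LinearMap.injective_iff_surjective.1 hinj⟩

/-- for `(c,c̃) ∈ D(c,c̃)`, a nonderogatory `A`, and a solution `X` of (⋆),
with `S = ker ν ∩ ker β` if `(c,c̃) = (0,0)` and `S = ker ψ ∩ ker ν ∩ ker β` otherwise:
`ker X = ker Xᵗ ⊆ S` and `A(ker X) ⊆ ker X`; in particular, if no nonzero eigenvector of
`A^ℂ` lies in `S ⊗ ℂ`, then `X` is invertible. -/
theorem stmt_1 [NormedAddCommGroup V] [InnerProductSpace ℝ V] [FiniteDimensional ℝ V]
    [NormedAddCommGroup W₁] [InnerProductSpace ℝ W₁] [FiniteDimensional ℝ W₁]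
    [NormedAddCommGroup W₂] [InnerProductSpace ℝ W₂] [FiniteDimensional ℝ W₂]
    (c ct : ℝ) (hD : ¬ (ct < 0 ∧ ct ≤ c ∧ c ≤ 0))
    (A : Module.End ℝ V)
    (hA : minpoly ℝ (A : V →ₗ[ℝ] V) = LinearMap.charpoly (A : V →ₗ[ℝ] V))
    (ψ : V →ₗ[ℝ] ℝ) (ν : V →ₗ[ℝ] W₁) (β : V →ₗ[ℝ] W₂)
    (X : Module.End ℝ V) (hX : SolvesSys c ct A ψ ν β X)
    (S : Submodule ℝ V)
    (hS : S = if c = 0 ∧ ct = 0 then LinearMap.ker ν ⊓ LinearMap.ker β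
      else LinearMap.ker ψ ⊓ LinearMap.ker ν ⊓ LinearMap.ker β) :
    LinearMap.ker X = LinearMap.ker (LinearMap.adjoint X) ∧
    LinearMap.ker X ≤ S ∧
    Submodule.map (A : V →ₗ[ℝ] V) (LinearMap.ker X) ≤ LinearMap.ker X ∧
    ((∀ μ : ℂ, Module.End.HasEigenvalue (LinearMap.baseChange ℂ (A : V →ₗ[ℝ] V)) μ →
        Module.End.eigenspace (LinearMap.baseChange ℂ (A : V →ₗ[ℝ] V)) μ ⊓
          Submodule.baseChange ℂ S = ⊥) →
      Function.Bijective X) :=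
  stmt_1_general c ct hD A ψ ν β X hX S hS
end

section
/- Let V, W₁, W₂ be finite-dimensional real inner product spaces, c, c̃ ∈ ℝ, and let A be a symmetric endomorphism of V with k = dim V distinct eigenvalues α₁,…,α_k and corresponding orthonormal eigenvectors a₁,…,a_k. Let ψ : V → ℝ be linear and ν : V → W₁, β : V → W₂ linear maps. Then the system (⋆) { X + Xᵗ = νᵗν + βᵗβ + c̃·ψᵗψ ; X∘A + Aᵗ∘Xᵗ = βᵗβ − (c−c̃)·ψᵗψ } admits a solution X ∈ End(V) if and only if (1−α_i)‖β(a_i)‖² − α_i‖ν(a_i)‖² − ((c−c̃) + α_i c̃)·ψ(a_i)² = 0 for every i = 1,…,k. Moreover, if these equations hold, the solution X is unique and is given by ⟨X a_i, a_i⟩ = G_{ii}/2 and, for i ≠ j, ⟨X a_i, a_j⟩ = (ρ_{ij} − α_j G_{ij})/(α_i − α_j), where ρ_{ij} = ⟨β(a_i), β(a_j)⟩ − (c−c̃)ψ(a_i)ψ(a_j) and G_{ij} = ⟨ν(a_i), ν(a_j)⟩ + ⟨β(a_i), β(a_j)⟩ + c̃·ψ(a_i)ψ(a_j). -/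
/-!
In an orthonormal eigenbasis `aᵢ` of `A`, write `xᵢⱼ = ⟪X aᵢ, aⱼ⟫`. Both equations of (⋆) are
symmetric, and their `(i, j)` and `(j, i)` entries reduce to the same pair of scalar equations
`xᵢⱼ + xⱼᵢ = Gᵢⱼ`, `αᵢ xᵢⱼ + αⱼ xⱼᵢ = ρᵢⱼ`. For `i ≠ j` this `2 × 2` system has determinant
`αⱼ - αᵢ ≠ 0`, hence the unique solution of the statement; for `i = j` it reads `2xᵢᵢ = Gᵢᵢ`,
`2αᵢxᵢᵢ = ρᵢᵢ`, which is solvable exactly when `ρᵢᵢ = αᵢGᵢᵢ`, and this is the `i`-th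
condition of the theorem.
-/

open scoped RealInnerProductSpace

variable {V W₁ W₂ : Type*}

open Matrix LinearMap

section DiagSystem

variable {ι : Type*} [DecidableEq ι] {α : ι → ℝ} {G ρ x : Matrix ι ι ℝ}

noncomputable def diagSystemSolution (α : ι → ℝ) (G ρ : Matrix ι ι ℝ) : Matrix ι ι ℝ :=
  of fun i j => if i = j then G i i / 2 else (ρ i j - α j * G i j) / (α i - α j)

theorem diagSystemSolution_apply_self (i : ι) : diagSystemSolution α G ρ i i = G i i / 2 :=
  if_pos rfl

theorem diagSystemSolution_apply_of_ne {i j : ι} (hij : i ≠ j) :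
    diagSystemSolution α G ρ i j = (ρ i j - α j * G i j) / (α i - α j) :=
  if_neg hij

variable [Fintype ι]

def SolvesDiagSystem (α : ι → ℝ) (G ρ x : Matrix ι ι ℝ) : Prop :=
  x + xᵀ = G ∧ diagonal α * x + xᵀ * diagonal α = ρ

theorem solvesDiagSystem_iff : SolvesDiagSystem α G ρ x ↔
    ∀ i j, x i j + x j i = G i j ∧ α i * x i j + α j * x j i = ρ i j := by
  simp only [SolvesDiagSystem, ← Matrix.ext_iff, Matrix.add_apply, transpose_apply, diagonal_mul,
    mul_diagonal, ← forall_and, mul_comm (x _ _) (α _)]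

theorem SolvesDiagSystem.diag_eq (h : SolvesDiagSystem α G ρ x) (i : ι) :
    ρ i i = α i * G i i := by
  obtain ⟨h₁, h₂⟩ := solvesDiagSystem_iff.1 h i i
  linear_combination α i * h₁ - h₂

theorem SolvesDiagSystem.eq_diagSystemSolution (hα : Function.Injective α)
    (h : SolvesDiagSystem α G ρ x) : x = diagSystemSolution α G ρ := by
  ext i j
  obtain ⟨h₁, h₂⟩ := solvesDiagSystem_iff.1 h i j
  by_cases hij : i = j
  · subst hij
    rw [diagSystemSolution_apply_self]
    linarith
  · rw [diagSystemSolution_apply_of_ne hij, eq_div_iff (sub_ne_zero.2 (hα.ne hij))]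
    linear_combination h₂ - α j * h₁

theorem solvesDiagSystem_diagSystemSolution (hα : Function.Injective α) (hG : Gᵀ = G)
    (hρ : ρᵀ = ρ) (hdiag : ∀ i, ρ i i = α i * G i i) :
    SolvesDiagSystem α G ρ (diagSystemSolution α G ρ) := by
  refine solvesDiagSystem_iff.2 fun i j => ?_
  by_cases hij : i = j
  · subst hij
    rw [diagSystemSolution_apply_self, hdiag]
    constructor <;> ring
  · have hα₁ : α i - α j ≠ 0 := sub_ne_zero.2 (hα.ne hij)
    have hα₂ : α j - α i ≠ 0 := sub_ne_zero.2 (hα.ne (Ne.symm hij))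
    rw [diagSystemSolution_apply_of_ne hij, diagSystemSolution_apply_of_ne (Ne.symm hij),
      ← transpose_apply G i j, hG, ← transpose_apply ρ i j, hρ]
    constructor <;> field_simp <;> ring

theorem exists_solvesDiagSystem_iff (hα : Function.Injective α) (hG : Gᵀ = G) (hρ : ρᵀ = ρ) :
    (∃ x, SolvesDiagSystem α G ρ x) ↔ ∀ i, ρ i i = α i * G i i :=
  ⟨fun ⟨_, h⟩ => h.diag_eq, fun hdiag => ⟨_, solvesDiagSystem_diagSystemSolution hα hG hρ hdiag⟩⟩

theorem existsUnique_solvesDiagSystem (hα : Function.Injective α) (hG : Gᵀ = G) (hρ : ρᵀ = ρ)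
    (hdiag : ∀ i, ρ i i = α i * G i i) : ∃! x, SolvesDiagSystem α G ρ x :=
  ⟨_, solvesDiagSystem_diagSystemSolution hα hG hρ hdiag, fun _ h => h.eq_diagSystemSolution hα⟩

end DiagSystem

section Eigenbasis

variable {ι : Type*} [Fintype ι] [DecidableEq ι]
  [NormedAddCommGroup V] [InnerProductSpace ℝ V] [FiniteDimensional ℝ V]
  (b : OrthonormalBasis ι ℝ V) {A : Module.End ℝ V} {α : ι → ℝ}

theorem OrthonormalBasis.transpose_toMatrixOrthonormal_apply (T : Module.End ℝ V) (i j : ι) :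
    (toMatrixOrthonormal b T)ᵀ i j = ⟪T (b i), b j⟫ := by
  rw [transpose_apply, toMatrixOrthonormal_apply_apply, real_inner_comm]

theorem OrthonormalBasis.toMatrixOrthonormal_eq_diagonal (heig : ∀ i, A (b i) = α i • b i) :
    toMatrixOrthonormal b A = diagonal α := by
  ext i j
  rw [toMatrixOrthonormal_apply_apply, heig, real_inner_smul_right,
    orthonormal_iff_ite.1 b.orthonormal, diagonal_apply]
  split_ifs with h <;> simp [h]

theorem OrthonormalBasis.toMatrixOrthonormal_adjoint (T : Module.End ℝ V) :
    toMatrixOrthonormal b (adjoint T) = (toMatrixOrthonormal b T)ᵀ := by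
  rw [← star_eq_adjoint, map_star, star_eq_conjTranspose, conjTranspose_eq_transpose_of_trivial]

theorem OrthonormalBasis.add_adjoint_eq_and_mul_add_eq_iff (heig : ∀ i, A (b i) = α i • b i)
    (X P Q : Module.End ℝ V) :
    (X + adjoint X = P ∧ X * A + adjoint A * adjoint X = Q) ↔
      SolvesDiagSystem α (toMatrixOrthonormal b P)ᵀ (toMatrixOrthonormal b Q)ᵀ
        (toMatrixOrthonormal b X)ᵀ := by
  have hmat (S T : Module.End ℝ V) :
      S = T ↔ (toMatrixOrthonormal b S)ᵀ = (toMatrixOrthonormal b T)ᵀ := by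
    rw [transpose_inj]
    exact (toMatrixOrthonormal b).injective.eq_iff.symm
  rw [hmat (X + _), hmat (X * A + _), SolvesDiagSystem]
  simp only [map_add, map_mul, b.toMatrixOrthonormal_adjoint, b.toMatrixOrthonormal_eq_diagonal heig,
    transpose_add, transpose_mul, transpose_transpose, diagonal_transpose, add_comm]

variable [NormedAddCommGroup W₁] [InnerProductSpace ℝ W₁] [FiniteDimensional ℝ W₁]
  [NormedAddCommGroup W₂] [InnerProductSpace ℝ W₂] [FiniteDimensional ℝ W₂]

theorem OrthonormalBasis.transpose_toMatrixOrthonormal_gram_apply (ν : V →ₗ[ℝ] W₁) (i j : ι) :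
    (toMatrixOrthonormal b (gram ν))ᵀ i j = ⟪ν (b i), ν (b j)⟫ := by
  rw [b.transpose_toMatrixOrthonormal_apply]
  exact adjoint_inner_left ν (b j) (ν (b i))

theorem OrthonormalBasis.solvesSys_iff (heig : ∀ i, A (b i) = α i • b i) {c ct : ℝ}
    {ψ : V →ₗ[ℝ] ℝ} {ν : V →ₗ[ℝ] W₁} {β : V →ₗ[ℝ] W₂} {ρ G : Matrix ι ι ℝ}
    (hρ : ∀ i j, ρ i j = ⟪β (b i), β (b j)⟫ - (c - ct) * (ψ (b i) * ψ (b j)))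
    (hG : ∀ i j, G i j = ⟪ν (b i), ν (b j)⟫ + ⟪β (b i), β (b j)⟫ + ct * (ψ (b i) * ψ (b j)))
    (X : Module.End ℝ V) :
    SolvesSys c ct A ψ ν β X ↔ SolvesDiagSystem α G ρ (toMatrixOrthonormal b X)ᵀ := by
  have hGmat : (toMatrixOrthonormal b (gram ν + gram β + ct • gram ψ))ᵀ = G := by
    ext i j
    simp only [map_add, map_smul, transpose_add, transpose_smul, Matrix.add_apply,
      Matrix.smul_apply, smul_eq_mul, b.transpose_toMatrixOrthonormal_gram_apply,
      Real.inner_apply, hG]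
  have hρmat : (toMatrixOrthonormal b (gram β - (c - ct) • gram ψ))ᵀ = ρ := by
    ext i j
    simp only [map_sub, map_smul, transpose_sub, transpose_smul, Matrix.sub_apply,
      Matrix.smul_apply, smul_eq_mul, b.transpose_toMatrixOrthonormal_gram_apply,
      Real.inner_apply, hρ]
  rw [← hGmat, ← hρmat]
  exact b.add_adjoint_eq_and_mul_add_eq_iff heig X _ _

end Eigenbasis

theorem stmt_4_general [NormedAddCommGroup V] [InnerProductSpace ℝ V] [FiniteDimensional ℝ V]
    [NormedAddCommGroup W₁] [InnerProductSpace ℝ W₁] [FiniteDimensional ℝ W₁]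
    [NormedAddCommGroup W₂] [InnerProductSpace ℝ W₂] [FiniteDimensional ℝ W₂]
    (c ct : ℝ) (A : Module.End ℝ V)
    (α : Fin (Module.finrank ℝ V) → ℝ) (hinj : Function.Injective α)
    (a : Fin (Module.finrank ℝ V) → V) (hON : Orthonormal ℝ a)
    (heig : ∀ i, A (a i) = α i • a i)
    (ψ : V →ₗ[ℝ] ℝ) (ν : V →ₗ[ℝ] W₁) (β : V →ₗ[ℝ] W₂)
    (ρ G : Fin (Module.finrank ℝ V) → Fin (Module.finrank ℝ V) → ℝ)
    (hρ : ∀ i j, ρ i j = ⟪β (a i), β (a j)⟫ - (c - ct) * (ψ (a i) * ψ (a j)))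
    (hG : ∀ i j, G i j = ⟪ν (a i), ν (a j)⟫ + ⟪β (a i), β (a j)⟫ + ct * (ψ (a i) * ψ (a j))) :
    ((∃ X : Module.End ℝ V, SolvesSys c ct A ψ ν β X) ↔
      ∀ i, (1 - α i) * ‖β (a i)‖ ^ 2 - α i * ‖ν (a i)‖ ^ 2
          - ((c - ct) + α i * ct) * ψ (a i) ^ 2 = 0) ∧
    ((∀ i, (1 - α i) * ‖β (a i)‖ ^ 2 - α i * ‖ν (a i)‖ ^ 2
          - ((c - ct) + α i * ct) * ψ (a i) ^ 2 = 0) →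
      (∃! X : Module.End ℝ V, SolvesSys c ct A ψ ν β X) ∧
      ∀ X : Module.End ℝ V, SolvesSys c ct A ψ ν β X →
        (∀ i, ⟪X (a i), a i⟫ = G i i / 2) ∧
        ∀ i j, i ≠ j → ⟪X (a i), a j⟫ = (ρ i j - α j * G i j) / (α i - α j)) := by
  obtain ⟨b, rfl⟩ : ∃ b : OrthonormalBasis (Fin (Module.finrank ℝ V)) ℝ V, ⇑b = a :=
    ⟨.mk hON (hON.linearIndependent.span_eq_top_of_card_eq_finrank' (by simp)).ge,
      OrthonormalBasis.coe_mk _ _⟩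
  let e : Module.End ℝ V ≃ Matrix _ _ ℝ :=
    (toMatrixOrthonormal b).toEquiv.trans (transposeAddEquiv _ _ ℝ).toEquiv
  have hsys (X : Module.End ℝ V) : SolvesSys c ct A ψ ν β X ↔ SolvesDiagSystem α G ρ (e X) :=
    b.solvesSys_iff heig hρ hG X
  have hGsymm : Gᵀ = G := by
    ext i j
    rw [show Gᵀ i j = G j i from rfl, hG, hG, real_inner_comm (ν _), real_inner_comm (β _),
      mul_comm (ψ _)]
  have hρsymm : ρᵀ = ρ := by
    ext i j
    rw [show ρᵀ i j = ρ j i from rfl, hρ, hρ, real_inner_comm (β _), mul_comm (ψ _)]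
  have hcond : (∀ i, (1 - α i) * ‖β (b i)‖ ^ 2 - α i * ‖ν (b i)‖ ^ 2
      - ((c - ct) + α i * ct) * ψ (b i) ^ 2 = 0) ↔ ∀ i, ρ i i = α i * G i i := by
    refine forall_congr' fun i => ?_
    rw [hρ, hG, real_inner_self_eq_norm_sq, real_inner_self_eq_norm_sq]
    constructor <;> intro h <;> linear_combination h
  refine ⟨(e.exists_congr hsys).trans
      ((exists_solvesDiagSystem_iff hinj hGsymm hρsymm).trans hcond.symm), fun h => ⟨?_, ?_⟩⟩
  · exact (e.existsUnique_congr hsys).2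
      (existsUnique_solvesDiagSystem hinj hGsymm hρsymm (hcond.1 h))
  · intro X hX
    have hXmat : e X = diagSystemSolution α G ρ := ((hsys X).1 hX).eq_diagSystemSolution hinj
    have hentry (i j) : ⟪X (b i), b j⟫ = diagSystemSolution α G ρ i j := by
      rw [← hXmat]
      exact (b.transpose_toMatrixOrthonormal_apply X i j).symm
    exact ⟨fun i => (hentry i i).trans (diagSystemSolution_apply_self i),
      fun i j hij => (hentry i j).trans (diagSystemSolution_apply_of_ne hij)⟩

/-- for a symmetric `A` with `k = dim V` distinct eigenvalues `αᵢ` and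
orthonormal eigenvectors `aᵢ`, the system (⋆) has a solution iff
`(1−αᵢ)‖β(aᵢ)‖² − αᵢ‖ν(aᵢ)‖² − ((c−c̃) + αᵢc̃)·ψ(aᵢ)² = 0` for all `i`; in that case the
solution is unique and is given by `⟨Xaᵢ, aᵢ⟩ = Gᵢᵢ/2` and
`⟨Xaᵢ, aⱼ⟩ = (ρᵢⱼ − αⱼGᵢⱼ)/(αᵢ − αⱼ)` for `i ≠ j`. -/
theorem stmt_4 [NormedAddCommGroup V] [InnerProductSpace ℝ V] [FiniteDimensional ℝ V]
    [NormedAddCommGroup W₁] [InnerProductSpace ℝ W₁] [FiniteDimensional ℝ W₁]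
    [NormedAddCommGroup W₂] [InnerProductSpace ℝ W₂] [FiniteDimensional ℝ W₂]
    (c ct : ℝ) (A : Module.End ℝ V)
    (hsym : LinearMap.adjoint (A : V →ₗ[ℝ] V) = A)
    (α : Fin (Module.finrank ℝ V) → ℝ) (hinj : Function.Injective α)
    (a : Fin (Module.finrank ℝ V) → V) (hON : Orthonormal ℝ a)
    (heig : ∀ i, A (a i) = α i • a i)
    (ψ : V →ₗ[ℝ] ℝ) (ν : V →ₗ[ℝ] W₁) (β : V →ₗ[ℝ] W₂)
    (ρ G : Fin (Module.finrank ℝ V) → Fin (Module.finrank ℝ V) → ℝ)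
    (hρ : ∀ i j, ρ i j = ⟪β (a i), β (a j)⟫ - (c - ct) * (ψ (a i) * ψ (a j)))
    (hG : ∀ i j, G i j = ⟪ν (a i), ν (a j)⟫ + ⟪β (a i), β (a j)⟫ + ct * (ψ (a i) * ψ (a j))) :
    ((∃ X : Module.End ℝ V, SolvesSys c ct A ψ ν β X) ↔
      ∀ i, (1 - α i) * ‖β (a i)‖ ^ 2 - α i * ‖ν (a i)‖ ^ 2
          - ((c - ct) + α i * ct) * ψ (a i) ^ 2 = 0) ∧
    ((∀ i, (1 - α i) * ‖β (a i)‖ ^ 2 - α i * ‖ν (a i)‖ ^ 2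
          - ((c - ct) + α i * ct) * ψ (a i) ^ 2 = 0) →
      (∃! X : Module.End ℝ V, SolvesSys c ct A ψ ν β X) ∧
      ∀ X : Module.End ℝ V, SolvesSys c ct A ψ ν β X →
        (∀ i, ⟪X (a i), a i⟫ = G i i / 2) ∧
        ∀ i j, i ≠ j → ⟪X (a i), a j⟫ = (ρ i j - α j * G i j) / (α i - α j)) :=
  stmt_4_general c ct A α hinj a hON heig ψ ν β ρ G hρ hG
end

section
/- Let P be a k×k real matrix such that no complex eigenvalue λ of P has −λ also an eigenvalue of P (σ(P) ∩ (−σ(P)) = ∅, where σ denotes the set of complex eigenvalues). Let q_{−P}(x) = Σ_{ℓ=0}^{k} a_ℓ x^ℓ, with a_k = 1, be the characteristic polynomial of −P. Then for every k×k real matrix C, the matrix q_{−P}(Pᵗ) is invertible, the Lyapunov equation Pᵗ X + X P = C admits a unique k×k real solution X, and this solution is given by X = (q_{−P}(Pᵗ))⁻¹ · Σ_{ℓ=1}^{k} a_ℓ Σ_{i=0}^{ℓ−1} (−1)^i (Pᵗ)^{ℓ−1−i} C P^i. -/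
/-!
Write `q` for the characteristic polynomial of `-P`. If `Pᵀ X + X P = C`, then
`(Pᵀ)^ℓ X - X (-P)^ℓ = Σ_{i<ℓ} (Pᵀ)^{ℓ-1-i} C (-P)^i`, and since `q(-P) = 0` (Cayley–Hamilton)
summing against the coefficients of `q` gives `q(Pᵀ) X = Σ_ℓ a_ℓ Σ_i (-1)^i (Pᵀ)^{ℓ-1-i} C P^i`.
The matrix `q(Pᵀ)` is invertible because the characteristic polynomials of `Pᵀ` and `-P` have no
common complex root, hence are coprime over `ℝ`. So every solution is given by the formula, the
map `X ↦ Pᵀ X + X P` is injective, and, the space being finite-dimensional, also surjective.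
-/

open Matrix Polynomial

lemma pow_mul_sub_mul_pow {R : Type*} [Ring R] (a b x : R) (l : ℕ) :
    a ^ l * x - x * b ^ l =
      ∑ i ∈ Finset.range l, a ^ (l - 1 - i) * (a * x - x * b) * b ^ i := by
  have htel := Finset.sum_range_sub' (fun i => a ^ (l - i) * x * b ^ i) l
  simp only [Nat.sub_zero, Nat.sub_self, pow_zero, mul_one, one_mul] at htel
  rw [← htel]
  refine Finset.sum_congr rfl fun i hi => ?_
  have hl : l - i = l - 1 - i + 1 := by grind
  rw [hl, Nat.sub_right_comm, ← Nat.sub_add_eq, pow_succ, pow_succ']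
  simp only [mul_sub, sub_mul, mul_assoc]

lemma aeval_mul_sub_mul_aeval {S R : Type*} [CommSemiring S] [Ring R] [Algebra S R]
    (p : S[X]) (a b x : R) :
    aeval a p * x - x * aeval b p =
      ∑ l ∈ Finset.range (p.natDegree + 1),
        p.coeff l • ∑ i ∈ Finset.range l, a ^ (l - 1 - i) * (a * x - x * b) * b ^ i := by
  simp only [aeval_eq_sum_range, Finset.sum_mul, Finset.mul_sum, ← Finset.sum_sub_distrib,
    smul_mul_assoc, mul_smul_comm, ← smul_sub, pow_mul_sub_mul_pow]

section Sylvester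

variable {n : Type*} [Fintype n] [DecidableEq n]

lemma Matrix.aeval_charpoly_mul_eq_sum {R : Type*} [CommRing R] (A B X : Matrix n n R) :
    aeval A B.charpoly * X =
      ∑ l ∈ Finset.range (B.charpoly.natDegree + 1),
        B.charpoly.coeff l • ∑ i ∈ Finset.range l, A ^ (l - 1 - i) * (A * X - X * B) * B ^ i := by
  rw [← aeval_mul_sub_mul_aeval, aeval_self_charpoly, mul_zero, sub_zero]

lemma Matrix.aeval_charpoly_neg_mul_eq_sum {R : Type*} [CommRing R] [Nontrivial R]
    (A P X : Matrix n n R) :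
    aeval A (-P).charpoly * X =
      ∑ l ∈ Finset.Icc 1 (Fintype.card n), (-P).charpoly.coeff l •
        ∑ i ∈ Finset.range l, (-1 : R) ^ i • (A ^ (l - 1 - i) * (A * X + X * P) * P ^ i) := by
  rw [aeval_charpoly_mul_eq_sum, charpoly_natDegree_eq_dim, Matrix.mul_neg, sub_neg_eq_add]
  symm
  refine (Finset.sum_subset (fun l hl => by grind) fun l hl hl' => ?_).trans
    (Finset.sum_congr rfl fun l _ => ?_)
  · obtain rfl : l = 0 := by grind
    simp
  · refine congrArg _ (Finset.sum_congr rfl fun i _ => ?_)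
    rw [← neg_one_smul R P, _root_.smul_pow, mul_smul_comm]

lemma Matrix.isUnit_aeval_charpoly_of_isCoprime {R : Type*} [CommRing R] {A B : Matrix n n R}
    (h : IsCoprime A.charpoly B.charpoly) : IsUnit (aeval A B.charpoly) := by
  obtain ⟨u, v, huv⟩ := h
  have := congrArg (aeval A) huv
  rw [map_add, map_mul, map_mul, aeval_self_charpoly, mul_zero, zero_add, map_one] at this
  exact (isUnit_iff_isUnit_det _).mpr (isUnit_det_of_left_inverse this)

lemma Matrix.isCoprime_charpoly_of_disjoint_spectrum {K L : Type*} [Field K] [Field L]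
    [IsAlgClosed L] [Algebra K L] {A B : Matrix n n K}
    (h : Disjoint (spectrum L (A.map (algebraMap K L))) (spectrum L (B.map (algebraMap K L)))) :
    IsCoprime A.charpoly B.charpoly := by
  have hroot (M : Matrix n n K) (μ : L) :
      aeval μ M.charpoly = 0 ↔ μ ∈ spectrum L (M.map (algebraMap K L)) := by
    rw [mem_spectrum_iff_isRoot_charpoly, charpoly_map, IsRoot, eval_map_algebraMap]
  rw [isCoprime_iff_aeval_ne_zero_of_isAlgClosed K L]
  intro μ
  rw [Ne, Ne, hroot, hroot, ← not_and_or]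
  exact fun hμ => Set.disjoint_left.mp h hμ.1 hμ.2

lemma Matrix.sylvester_surjective {K : Type*} [Field K] {A B : Matrix n n K}
    (h : IsUnit (aeval A B.charpoly)) : Function.Surjective fun X => A * X - X * B := by
  let L : Matrix n n K →ₗ[K] Matrix n n K := LinearMap.mulLeft K A - LinearMap.mulRight K B
  have hinj : Function.Injective L := by
    refine (injective_iff_map_eq_zero L).mpr fun X hX => ?_
    have hX : A * X - X * B = 0 := hX
    have := aeval_charpoly_mul_eq_sum A B X
    simp only [hX, mul_zero, zero_mul, Finset.sum_const_zero, smul_zero] at this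
    exact h.mul_right_eq_zero.mp this
  exact LinearMap.injective_iff_surjective.mp hinj

end Sylvester

/-- if `σ(P) ∩ (−σ(P)) = ∅` (complex eigenvalues of the real `k×k` matrix `P`),
then `q₋P(Pᵀ)` is invertible, where `q₋P` is the characteristic polynomial of `−P`, and for
every `C` the Lyapunov equation `Pᵀ X + X P = C` has the unique solution
`X = (q₋P(Pᵀ))⁻¹ · Σ_{ℓ=1}^{k} a_ℓ Σ_{i=0}^{ℓ−1} (−1)^i (Pᵀ)^{ℓ−1−i} C P^i`. -/
theorem stmt_7 (k : ℕ) (P : Matrix (Fin k) (Fin k) ℝ)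
    (hσ : spectrum ℂ (P.map (algebraMap ℝ ℂ)) ∩ (-spectrum ℂ (P.map (algebraMap ℝ ℂ))) = ∅) :
    IsUnit (Polynomial.aeval Pᵀ (Matrix.charpoly (-P))) ∧
    ∀ C X : Matrix (Fin k) (Fin k) ℝ,
      Pᵀ * X + X * P = C ↔
        X = (Polynomial.aeval Pᵀ (Matrix.charpoly (-P)))⁻¹ *
          ∑ l ∈ Finset.Icc 1 k, (Matrix.charpoly (-P)).coeff l •
            ∑ i ∈ Finset.range l, ((-1 : ℝ) ^ i) • (Pᵀ ^ (l - 1 - i) * C * P ^ i) := by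
  have hU : IsUnit (aeval Pᵀ (-P).charpoly) := by
    refine isUnit_aeval_charpoly_of_isCoprime ?_
    rw [charpoly_transpose]
    refine isCoprime_charpoly_of_disjoint_spectrum (L := ℂ) ?_
    rwa [Matrix.map_neg _ (map_neg _), ← spectrum.neg_eq, Set.disjoint_iff_inter_eq_empty]
  have hsolve : ∀ C X : Matrix (Fin k) (Fin k) ℝ, Pᵀ * X + X * P = C →
      X = (aeval Pᵀ (-P).charpoly)⁻¹ * ∑ l ∈ Finset.Icc 1 k, (-P).charpoly.coeff l •
        ∑ i ∈ Finset.range l, ((-1 : ℝ) ^ i) • (Pᵀ ^ (l - 1 - i) * C * P ^ i) := by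
    rintro C X rfl
    have hsum := aeval_charpoly_neg_mul_eq_sum Pᵀ P X
    rw [Fintype.card_fin] at hsum
    rw [← hsum, nonsing_inv_mul_cancel_left _ _ ((isUnit_iff_isUnit_det _).mp hU)]
  refine ⟨hU, fun C X => ⟨hsolve C X, fun hX => ?_⟩⟩
  obtain ⟨X₀, hX₀⟩ := sylvester_surjective hU C
  simp only [Matrix.mul_neg, sub_neg_eq_add] at hX₀
  rw [hX, ← hsolve C X₀ hX₀]
  exact hX₀
end

section
/- Let U ⊆ ℝⁿ be open and connected, and let v_i > 0 (1 ≤ i ≤ n) and h_{ij} (1 ≤ i ≠ j ≤ n) be smooth real functions on U solving the system (FL): h_{ij} = h_{ji}; ∂_j v_i = h_{ji} v_j for i ≠ j; Σ_{ℓ=1}^n ∂_ℓ h_{ij} = 0 for i ≠ j; ∂_ℓ h_{ij} = h_{iℓ} h_{jℓ} for distinct i, j, ℓ; and assume Σ_{i=1}^n v_i² = 1 on U. Let V be a finite-dimensional real inner product space, P an invertible endomorphism of V, and let φ, γ₁, …, γₙ : U → V be smooth maps solving the system (R₀): ∂_iφ = v_iγ_i; ∂_iγ_i = −(Pᵗ)⁻¹γ_i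 − Σ_{j≠i} h_{ij}γ_j; ∂_iγ_j = h_{ij}γ_i for j ≠ i. Then the map φ + Σ_{i=1}^n v_i Pᵗγ_i is constant on U. -/
open scoped RealInnerProductSpace

/-- if `(v, h)` is a smooth solution of the flat-Lagrangian system (FL) on an
open connected `U ⊆ ℝⁿ` with `vᵢ > 0` and `Σ vᵢ² = 1`, `P` is an invertible endomorphism of
`V`, and `(φ, γ₁, …, γₙ)` is a smooth solution of the linear system (R₀), then
`φ + Σ vᵢ Pᵗγᵢ` is constant on `U`. -/
theorem stmt_11 {V : Type*} [NormedAddCommGroup V] [InnerProductSpace ℝ V]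
    [FiniteDimensional ℝ V]
    (n : ℕ) (U : Set (Fin n → ℝ)) (hUo : IsOpen U) (hUc : IsConnected U)
    (v : Fin n → (Fin n → ℝ) → ℝ) (h : Fin n → Fin n → (Fin n → ℝ) → ℝ)
    (hv_smooth : ∀ i, ContDiffOn ℝ (⊤ : ℕ∞) (v i) U)
    (hh_smooth : ∀ i j, i ≠ j → ContDiffOn ℝ (⊤ : ℕ∞) (h i j) U)
    (hv_pos : ∀ i, ∀ x ∈ U, 0 < v i x)
    (hsym : ∀ i j, i ≠ j → ∀ x ∈ U, h i j x = h j i x)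
    (hFL1 : ∀ i j, i ≠ j → ∀ x ∈ U, fderiv ℝ (v i) x (Pi.single j 1) = h j i x * v j x)
    (hFL2 : ∀ i j, i ≠ j → ∀ x ∈ U, ∑ l, fderiv ℝ (h i j) x (Pi.single l 1) = 0)
    (hFL3 : ∀ i j l, i ≠ j → l ≠ i → l ≠ j → ∀ x ∈ U,
      fderiv ℝ (h i j) x (Pi.single l 1) = h i l x * h j l x)
    (hnorm : ∀ x ∈ U, ∑ i, v i x ^ 2 = 1)
    (P : Module.End ℝ V) (hP : IsUnit P)
    (φ : (Fin n → ℝ) → V) (γ : Fin n → (Fin n → ℝ) → V)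
    (hφ_smooth : ContDiffOn ℝ (⊤ : ℕ∞) φ U) (hγ_smooth : ∀ i, ContDiffOn ℝ (⊤ : ℕ∞) (γ i) U)
    (hR1 : ∀ i, ∀ x ∈ U, fderiv ℝ φ x (Pi.single i 1) = v i x • γ i x)
    (hR2 : ∀ i, ∀ x ∈ U, fderiv ℝ (γ i) x (Pi.single i 1) =
      -(Ring.inverse (LinearMap.adjoint P)) (γ i x) -
        ∑ j ∈ Finset.univ.erase i, h i j x • γ j x)
    (hR3 : ∀ i j, j ≠ i → ∀ x ∈ U,
      fderiv ℝ (γ j) x (Pi.single i 1) = h i j x • γ i x) :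
    ∀ x ∈ U, ∀ y ∈ U,
      φ x + ∑ i, v i x • (LinearMap.adjoint P) (γ i x) =
      φ y + ∑ i, v i y • (LinearMap.adjoint P) (γ i y) := by
  classical
  set Pt : V →ₗ[ℝ] V := LinearMap.adjoint P with hPtdef
  have hPtU : IsUnit Pt := by
    rw [hPtdef, ← LinearMap.star_eq_adjoint]; exact hP.star
  set Q : V →ₗ[ℝ] V := Ring.inverse (LinearMap.adjoint P) with hQdef
  have hPQ : ∀ u : V, Pt (Q u) = u := by
    intro u
    have h1 : Pt * Q = 1 := Ring.mul_inverse_cancel _ hPtU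
    calc Pt (Q u) = (Pt * Q) u := rfl
    _ = u := by rw [h1]; rfl
  set A : V →L[ℝ] V := LinearMap.toContinuousLinearMap Pt with hAdef
  have hA : ∀ u, A u = Pt u := fun u => rfl
  set f : (Fin n → ℝ) → V := fun z => φ z + A (∑ i, v i z • γ i z) with hfdef
  have hfx : ∀ z, f z = φ z + ∑ i, v i z • (LinearMap.adjoint P) (γ i z) := by
    intro z
    simp only [hfdef, map_sum, map_smul, hA, hPtdef]
  -- differentiability
  have hvd : ∀ i, ∀ z ∈ U, DifferentiableAt ℝ (v i) z := fun i z hz =>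
    ((hv_smooth i).contDiffAt (hUo.mem_nhds hz)).differentiableAt (by simp)
  have hγd : ∀ i, ∀ z ∈ U, DifferentiableAt ℝ (γ i) z := fun i z hz =>
    ((hγ_smooth i).contDiffAt (hUo.mem_nhds hz)).differentiableAt (by simp)
  have hφd : ∀ z ∈ U, DifferentiableAt ℝ φ z := fun z hz =>
    (hφ_smooth.contDiffAt (hUo.mem_nhds hz)).differentiableAt (by simp)
  have hGd : ∀ z ∈ U, DifferentiableAt ℝ (fun y => ∑ i, v i y • γ i y) z := fun z hz =>
    DifferentiableAt.fun_sum fun i _ => (hvd i z hz).smul (hγd i z hz)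
  have hfd : ∀ z ∈ U, DifferentiableAt ℝ f z := fun z hz =>
    (hφd z hz).add (A.differentiableAt.comp z (hGd z hz))
  -- key: derivative of f vanishes on U
  have key : ∀ x ∈ U, fderiv ℝ f x = 0 := by
    intro x hx
    set LG : (Fin n → ℝ) →L[ℝ] V :=
      ∑ i, (v i x • fderiv ℝ (γ i) x + (fderiv ℝ (v i) x).smulRight (γ i x)) with hLGdef
    have hG : HasFDerivAt (fun y => ∑ i, v i y • γ i y) LG x :=
      HasFDerivAt.fun_sum fun i _ => ((hvd i x hx).hasFDerivAt.smul (hγd i x hx).hasFDerivAt)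
    have hF : HasFDerivAt f (fderiv ℝ φ x + A.comp LG) x :=
      (hφd x hx).hasFDerivAt.add (A.hasFDerivAt.comp x hG)
    -- the sum of squares has zero derivative
    have hsq : HasFDerivAt (fun y => ∑ i, v i y * v i y)
        (∑ i, (v i x • fderiv ℝ (v i) x + v i x • fderiv ℝ (v i) x)) x :=
      HasFDerivAt.fun_sum fun i _ => (hvd i x hx).hasFDerivAt.mul (hvd i x hx).hasFDerivAt
    have hzero : (∑ i, (v i x • fderiv ℝ (v i) x + v i x • fderiv ℝ (v i) x)) = 0 := by
      have heq : (fun y => ∑ i, v i y * v i y) =ᶠ[nhds x] fun _ => (1:ℝ) := by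
        filter_upwards [hUo.mem_nhds hx] with z hz
        rw [← hnorm z hz]
        exact Finset.sum_congr rfl fun i _ => (pow_two (v i z)).symm
      rw [← hsq.fderiv, heq.fderiv_eq]
      exact fderiv_const_apply 1
    have hdir : ∀ k, (fderiv ℝ φ x + A.comp LG) (Pi.single k 1) = 0 := by
      intro k
      set e : Fin n → ℝ := Pi.single k 1 with hedef
      -- diagonal derivative of v k
      have h0 : ∑ i, (v i x * fderiv ℝ (v i) x e + v i x * fderiv ℝ (v i) x e) = 0 := by
        have := congrArg (fun (L : (Fin n → ℝ) →L[ℝ] ℝ) => L e) hzero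
        simpa only [ContinuousLinearMap.coe_sum', Finset.sum_apply,
          ContinuousLinearMap.add_apply, ContinuousLinearMap.coe_smul', Pi.smul_apply,
          smul_eq_mul, ContinuousLinearMap.zero_apply] using this
      rw [← Finset.sum_erase_add _ _ (Finset.mem_univ k)] at h0
      have h1 : ∑ i ∈ Finset.univ.erase k,
          (v i x * fderiv ℝ (v i) x e + v i x * fderiv ℝ (v i) x e)
          = ∑ i ∈ Finset.univ.erase k, 2 * (h k i x * (v i x * v k x)) := by
        refine Finset.sum_congr rfl fun i hi => ?_
        rw [hedef, hFL1 i k (Finset.ne_of_mem_erase hi) x hx]; ring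
      rw [h1] at h0
      have hvk : v k x ≠ 0 := (hv_pos k x hx).ne'
      have hdiag : fderiv ℝ (v k) x e
          = -∑ i ∈ Finset.univ.erase k, h k i x * v i x := by
        have h3 : ∑ i ∈ Finset.univ.erase k, 2 * (h k i x * (v i x * v k x))
            = 2 * v k x * ∑ i ∈ Finset.univ.erase k, h k i x * v i x := by
          rw [Finset.mul_sum]; exact Finset.sum_congr rfl fun i _ => by ring
        have h4 : 2 * v k x *
            (∑ i ∈ Finset.univ.erase k, h k i x * v i x + fderiv ℝ (v k) x e) = 0 := by
          rw [← h0, h3]; ring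
        rcases mul_eq_zero.1 h4 with h5 | h5
        · exact absurd h5 (mul_ne_zero two_ne_zero hvk)
        · linarith
      -- compute LG e
      have hLGe : LG e = ∑ i, (v i x • (fderiv ℝ (γ i) x e) + (fderiv ℝ (v i) x e) • γ i x) := by
        simp only [hLGdef, ContinuousLinearMap.coe_sum', Finset.sum_apply,
          ContinuousLinearMap.add_apply, ContinuousLinearMap.coe_smul', Pi.smul_apply,
          ContinuousLinearMap.smulRight_apply]
      have SG : LG e = -(v k x • Q (γ k x)) := by
        rw [hLGe, ← Finset.sum_erase_add _ _ (Finset.mem_univ k)]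
        have t1 : ∑ i ∈ Finset.univ.erase k,
            (v i x • (fderiv ℝ (γ i) x e) + (fderiv ℝ (v i) x e) • γ i x)
            = (∑ i ∈ Finset.univ.erase k, (v i x * h k i x) • γ k x)
              + ∑ i ∈ Finset.univ.erase k, (h k i x * v k x) • γ i x := by
          rw [← Finset.sum_add_distrib]
          refine Finset.sum_congr rfl fun i hi => ?_
          have hik : i ≠ k := Finset.ne_of_mem_erase hi
          rw [hedef, hR3 k i hik x hx, hFL1 i k hik x hx, smul_smul]
        have t2 : v k x • (fderiv ℝ (γ k) x e) + (fderiv ℝ (v k) x e) • γ k x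
            = -(v k x • Q (γ k x)) - (∑ j ∈ Finset.univ.erase k, (v k x * h k j x) • γ j x)
              - ∑ i ∈ Finset.univ.erase k, (h k i x * v i x) • γ k x := by
          rw [hedef, hR2 k x hx, hdiag]
          rw [smul_sub, smul_neg, Finset.smul_sum, neg_smul, Finset.sum_smul]
          simp only [smul_smul]
          abel
        rw [t1, t2]
        have c1 : ∑ i ∈ Finset.univ.erase k, (v i x * h k i x) • γ k x
            = ∑ i ∈ Finset.univ.erase k, (h k i x * v i x) • γ k x :=
          Finset.sum_congr rfl fun i _ => by rw [mul_comm]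
        have c2 : ∑ i ∈ Finset.univ.erase k, (h k i x * v k x) • γ i x
            = ∑ j ∈ Finset.univ.erase k, (v k x * h k j x) • γ j x :=
          Finset.sum_congr rfl fun i _ => by rw [mul_comm]
        rw [c1, c2]
        abel
      simp only [ContinuousLinearMap.add_apply, ContinuousLinearMap.comp_apply]
      rw [hedef, hR1 k x hx, ← hedef, SG, map_neg, map_smul, hA, hPQ]
      simp
    -- conclude
    rw [hF.fderiv]
    refine ContinuousLinearMap.ext fun w => ?_
    have hw : w = ∑ k, w k • (Pi.single k 1 : Fin n → ℝ) := by
      conv_lhs => rw [← Finset.univ_sum_single w]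
      exact Finset.sum_congr rfl fun i _ => by
        rw [← Pi.single_smul, smul_eq_mul, mul_one]
    calc (fderiv ℝ φ x + A.comp LG) w
        = (fderiv ℝ φ x + A.comp LG) (∑ k, w k • (Pi.single k 1 : Fin n → ℝ)) := by rw [← hw]
      _ = ∑ k, w k • ((fderiv ℝ φ x + A.comp LG) (Pi.single k (1:ℝ))) := by
          rw [map_sum]
          exact Finset.sum_congr rfl fun k _ => by rw [map_smul]
      _ = 0 := by simp [hdir]
  -- constancy on a connected open set
  intro x hx y hy
  rw [← hfx x, ← hfx y]
  haveI : PreconnectedSpace U := Subtype.preconnectedSpace hUc.isPreconnected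
  have hg : IsLocallyConstant (fun z : U => f z) := by
    rw [IsLocallyConstant.iff_exists_open]
    rintro ⟨z, hz⟩
    obtain ⟨ε, hε, hball⟩ := Metric.isOpen_iff.1 hUo z hz
    refine ⟨Subtype.val ⁻¹' Metric.ball z ε,
      Metric.isOpen_ball.preimage continuous_subtype_val,
      by simp [Set.mem_preimage, Metric.mem_ball, dist_self, hε], ?_⟩
    rintro ⟨w, hw⟩ hwball
    show f w = f z
    exact (convex_ball z ε).is_const_of_fderivWithin_eq_zero
      (fun u hu => (hfd u (hball hu)).differentiableWithinAt)
      (fun u hu => by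
        rw [fderivWithin_of_isOpen Metric.isOpen_ball hu]; exact key u (hball hu))
      (by simpa using hwball) (Metric.mem_ball_self hε)
  exact hg.apply_eq_of_preconnectedSpace ⟨x, hx⟩ ⟨y, hy⟩
end

section
/- Let U ⊆ ℝⁿ be open, c ∈ ℝ, p ≥ n, and ε₁, …, ε_p ∈ {−1, 1}. Let v_i > 0 (1 ≤ i ≤ n) and h_{ir} (1 ≤ i ≤ n, 1 ≤ r ≤ p, r ≠ i) be smooth real functions on U solving the system (CC): ∂_j v_i = h_{ji} v_j (1 ≤ i ≠ j ≤ n); ∂_i h_{ij} + ∂_j h_{ji} + Σ_{ℓ≤n, ℓ∉{i,j}} h_{ℓi}h_{ℓj} + c·v_i v_j = 0 (i ≠ j ≤ n); ∂_j h_{ir} = h_{ij}h_{jr} (j ≤ n, r ∉ {i,j}); ε_j ∂_j h_{ij} + ε_i ∂_i h_{ji} + Σ_{r≤p, r∉{i,j}} ε_r h_{ir}h_{jr} = 0 (i ≠ j ≤ n). Let V be a finite-dimensional real inner product space, L an invertible endomorphism of V, and let φ, γ₁, …, γₙ, β¹, …, β^p : U → V be smooth maps solving the system (R_L): ∂_iφ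 = v_iγ_i; ∂_iγ_j = h_{ji}γ_i (i ≠ j ≤ n); ∂_iγ_i = −Σ_{j≤n, j≠i} h_{ji}γ_j − ((Lᵗ)⁻¹ − I)β^i − c·v_iφ; ∂_iβ^r = h_{ir}β^i (r ≠ i); ε_i ∂_iβ^i = −γ_i − Σ_{r≠i} ε_r h_{ir}β^r. Let Ω : U → End(V) be smooth, invertible at every point, and satisfy: (a) (∂_iΩ)(w) = −⟨(Lᵗ)⁻¹β^i, w⟩·γ_i for all w ∈ V and 1 ≤ i ≤ n; (b) Ω + Ωᵗ = Σ_{i≤n} γ_iγ_iᵗ + Σ_{r≤p} ε_r β^r(β^r)ᵗ + c·φφᵗ; (c) Ω∘L + Lᵗ∘Ωᵗ = Σ_{r≤p} ε_r β^r(β^r)ᵗ. Then the functions ṽ_j = v_j + ⟨β^j, L⁻¹Ω⁻¹φ⟩ (1 ≤ j ≤ n) and h̃_{ir} = h_{ir} + ⟨β^r, L⁻¹Ω⁻¹γ_i⟩ (1 ≤ i ≤ n, 1 ≤ r ≤ p, r ≠ i) again solve the system (CC) on U (with the same c and the same signs ε_r). -/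
open scoped RealInnerProductSpace TensorProduct

/-- The system (CC) of PDEs associated, in principal coordinates, to `n`-dimensional
submanifolds of constant sectional curvature `c` of pseudo-Riemannian space forms of
curvature `c`, with signs `ε_r` and `p ≥ n`; the indices `1 ≤ i ≤ n` are identified with
indices `≤ p` via `Fin.castLE`. -/
def SolvesCC (n p : ℕ) (hnp : n ≤ p) (c : ℝ) (ε : Fin p → ℝ) (U : Set (Fin n → ℝ))
    (v : Fin n → (Fin n → ℝ) → ℝ) (h : Fin n → Fin p → (Fin n → ℝ) → ℝ) : Prop :=
  (∀ i, ContDiffOn ℝ (⊤ : ℕ∞) (v i) U) ∧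
  (∀ (i : Fin n) (r : Fin p), r ≠ Fin.castLE hnp i → ContDiffOn ℝ (⊤ : ℕ∞) (h i r) U) ∧
  (∀ i j : Fin n, i ≠ j → ∀ x ∈ U,
    fderiv ℝ (v i) x (Pi.single j 1) = h j (Fin.castLE hnp i) x * v j x) ∧
  (∀ i j : Fin n, i ≠ j → ∀ x ∈ U,
    fderiv ℝ (h i (Fin.castLE hnp j)) x (Pi.single i 1) +
      fderiv ℝ (h j (Fin.castLE hnp i)) x (Pi.single j 1) +
      (∑ l ∈ (Finset.univ.erase i).erase j,
        h l (Fin.castLE hnp i) x * h l (Fin.castLE hnp j) x) +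
      c * (v i x * v j x) = 0) ∧
  (∀ (i j : Fin n) (r : Fin p), i ≠ j → r ≠ Fin.castLE hnp i → r ≠ Fin.castLE hnp j →
    ∀ x ∈ U, fderiv ℝ (h i r) x (Pi.single j 1) = h i (Fin.castLE hnp j) x * h j r x) ∧
  (∀ i j : Fin n, i ≠ j → ∀ x ∈ U,
    ε (Fin.castLE hnp j) * fderiv ℝ (h i (Fin.castLE hnp j)) x (Pi.single j 1) +
      ε (Fin.castLE hnp i) * fderiv ℝ (h j (Fin.castLE hnp i)) x (Pi.single i 1) +
      (∑ r ∈ (Finset.univ.erase (Fin.castLE hnp i)).erase (Fin.castLE hnp j),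
        ε r * (h i r x * h j r x)) = 0)

variable {V : Type*}

/-- The rank-one operator `xyᵗ : w ↦ ⟨y, w⟩ x`. -/
noncomputable def rankOne [NormedAddCommGroup V] [InnerProductSpace ℝ V] (x y : V) :
    V →L[ℝ] V :=
  (innerSL ℝ y).smulRight x

set_option linter.unusedSectionVars false

section Aux
open ContinuousLinearMap
variable {V : Type*} [NormedAddCommGroup V] [InnerProductSpace ℝ V] [FiniteDimensional ℝ V]
  [CompleteSpace V]

lemma rankOne_apply' (x y w : V) : rankOne x y w = ⟪y, w⟫ • x := rfl

lemma adjoint_mul' (f g : V →L[ℝ] V) : adjoint (f * g) = adjoint g * adjoint f :=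
  adjoint_comp f g

lemma adjoint_one' : adjoint (1 : V →L[ℝ] V) = 1 := adjoint_id

lemma ring_inverse_adjoint {L : V →L[ℝ] V} (hL : IsUnit L) :
    Ring.inverse (adjoint L) = adjoint (Ring.inverse L) := by
  have h1 : adjoint (Ring.inverse L) * adjoint L = 1 := by
    rw [← adjoint_mul', Ring.mul_inverse_cancel _ hL, adjoint_one']
  have h2 : adjoint L * adjoint (Ring.inverse L) = 1 := by
    rw [← adjoint_mul', Ring.inverse_mul_cancel _ hL, adjoint_one']
  exact Ring.inverse_unit ⟨adjoint L, adjoint (Ring.inverse L), h2, h1⟩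


lemma diffOn_at {E F : Type*} [NormedAddCommGroup E] [NormedSpace ℝ E] [NormedAddCommGroup F]
    [NormedSpace ℝ F] {f : E → F} {U : Set E} (hU : IsOpen U) (hf : ContDiffOn ℝ (⊤ : ℕ∞) f U)
    {x : E} (hx : x ∈ U) : DifferentiableAt ℝ f x :=
  (hf.contDiffAt (hU.mem_nhds hx)).differentiableAt (by simp)

set_option maxHeartbeats 1000000 in
lemma key_deriv {n : ℕ} {U : Set (Fin n → ℝ)} (hUo : IsOpen U)
    (L : V →L[ℝ] V) (hL : IsUnit L) (Ω : (Fin n → ℝ) → V →L[ℝ] V)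
    (hΩ_smooth : ContDiffOn ℝ (⊤ : ℕ∞) Ω U) (hΩinv : ∀ x ∈ U, IsUnit (Ω x))
    (bβ gγ : Fin n → (Fin n → ℝ) → V)
    (hΩa : ∀ i : Fin n, ∀ x ∈ U, ∀ w : V, (fderiv ℝ Ω x (Pi.single i 1)) w =
      -(⟪Ring.inverse (adjoint L) (bβ i x), w⟫) • gγ i x)
    (b y : (Fin n → ℝ) → V) (hb : ContDiffOn ℝ (⊤ : ℕ∞) b U) (hy : ContDiffOn ℝ (⊤ : ℕ∞) y U)
    {x : Fin n → ℝ} (hx : x ∈ U) (i : Fin n) :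
    fderiv ℝ (fun z => ⟪b z, (Ring.inverse L * Ring.inverse (Ω z)) (y z)⟫) x (Pi.single i 1)
      = ⟪fderiv ℝ b x (Pi.single i 1), (Ring.inverse L * Ring.inverse (Ω x)) (y x)⟫
        + ⟪bβ i x, (Ring.inverse L * Ring.inverse (Ω x)) (y x)⟫
            * ⟪b x, (Ring.inverse L * Ring.inverse (Ω x)) (gγ i x)⟫
        + ⟪b x, (Ring.inverse L * Ring.inverse (Ω x)) (fderiv ℝ y x (Pi.single i 1))⟫ := by
  have hbd : DifferentiableAt ℝ b x := diffOn_at hUo hb hx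
  have hyd : DifferentiableAt ℝ y x := diffOn_at hUo hy hx
  have hΩd : HasFDerivAt Ω (fderiv ℝ Ω x) x := (diffOn_at hUo hΩ_smooth hx).hasFDerivAt
  have hu : ((hΩinv x hx).unit : V →L[ℝ] V) = Ω x := (hΩinv x hx).unit_spec
  have e1 : (((hΩinv x hx).unit⁻¹ : (V →L[ℝ] V)ˣ) : V →L[ℝ] V) = Ring.inverse (Ω x) := by
    rw [← Ring.inverse_unit]
    exact congrArg Ring.inverse hu
  have hinv := hasFDerivAt_ringInverse (𝕜 := ℝ) (hΩinv x hx).unit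
  rw [hu, e1] at hinv
  have hρd := hinv.comp x hΩd
  have hGd := hρd.clm_apply hyd.hasFDerivAt
  have hLGd := (Ring.inverse L).hasFDerivAt.comp x hGd
  have hgd : DifferentiableAt ℝ (fun z => Ring.inverse L ((Ring.inverse (Ω z)) (y z))) x :=
    hLGd.differentiableAt
  have hgval : fderiv ℝ (fun z => Ring.inverse L ((Ring.inverse (Ω z)) (y z))) x (Pi.single i 1)
      = Ring.inverse L (Ring.inverse (Ω x) (fderiv ℝ y x (Pi.single i 1)))
        + ⟪Ring.inverse (adjoint L) (bβ i x), Ring.inverse (Ω x) (y x)⟫ •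
            Ring.inverse L (Ring.inverse (Ω x) (gγ i x)) := by
    rw [show (fun z => Ring.inverse L ((Ring.inverse (Ω z)) (y z)))
        = (⇑(Ring.inverse L) ∘ fun z => ((Ring.inverse ∘ Ω) z) (y z)) from rfl, hLGd.fderiv]
    simp only [ContinuousLinearMap.coe_comp', Function.comp_apply,
      ContinuousLinearMap.add_apply, ContinuousLinearMap.comp_apply,
      ContinuousLinearMap.flip_apply, ContinuousLinearMap.neg_apply,
      ContinuousLinearMap.mulLeftRight_apply, ContinuousLinearMap.mul_apply]
    rw [hΩa i x hx (Ring.inverse (Ω x) (y x))]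
    simp [map_smul]
  simp only [ContinuousLinearMap.mul_apply]
  rw [fderiv_inner_apply ℝ hbd hgd (Pi.single i 1), hgval]
  have hadj : ⟪Ring.inverse (adjoint L) (bβ i x), Ring.inverse (Ω x) (y x)⟫
      = ⟪bβ i x, Ring.inverse L (Ring.inverse (Ω x) (y x))⟫ := by
    rw [ring_inverse_adjoint hL, adjoint_inner_left]
  rw [inner_add_right, real_inner_smul_right, hadj]
  ring

lemma cancel_left {T : V →L[ℝ] V} (hT : IsUnit T) (z : V) : T (Ring.inverse T z) = z := by
  have := DFunLike.congr_fun (Ring.mul_inverse_cancel T hT) z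
  simpa using this

lemma cancel_right {T : V →L[ℝ] V} (hT : IsUnit T) (z : V) : Ring.inverse T (T z) = z := by
  have := DFunLike.congr_fun (Ring.inverse_mul_cancel T hT) z
  simpa using this

lemma E3_lemma {p : ℕ} (ε : Fin p → ℝ) (L ω : V →L[ℝ] V) (hL : IsUnit L) (hω : IsUnit ω)
    (βv : Fin p → V)
    (hc : ω * L + adjoint L * adjoint ω = ∑ r, ε r • rankOne (βv r) (βv r))
    (u w : V) :
    ⟪u, (Ring.inverse L * Ring.inverse ω) w⟫ + ⟪w, (Ring.inverse L * Ring.inverse ω) u⟫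
      = ∑ r, ε r * (⟪βv r, (Ring.inverse L * Ring.inverse ω) u⟫ *
          ⟪βv r, (Ring.inverse L * Ring.inverse ω) w⟫) := by
  have happ := congrArg (fun z => (⟪(Ring.inverse L * Ring.inverse ω) u, z⟫ : ℝ))
    (DFunLike.congr_fun hc ((Ring.inverse L * Ring.inverse ω) w))
  simp only [ContinuousLinearMap.add_apply, ContinuousLinearMap.mul_apply,
    ContinuousLinearMap.sum_apply, ContinuousLinearMap.smul_apply, rankOne_apply',
    inner_add_right, inner_sum, real_inner_smul_right] at happ
  rw [cancel_left hL, cancel_left hω] at happ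
  rw [adjoint_inner_right, cancel_left hL, adjoint_inner_right, cancel_left hω] at happ
  simp only [ContinuousLinearMap.mul_apply]
  rw [real_inner_comm w ((Ring.inverse L) ((Ring.inverse ω) u))] at happ
  rw [add_comm, happ]
  exact Finset.sum_congr rfl fun r _ => by
    rw [real_inner_comm (βv r) ((Ring.inverse L) ((Ring.inverse ω) u))]; ring

lemma adjoint_isUnit {L : V →L[ℝ] V} (hL : IsUnit L) : IsUnit (adjoint L) := by
  have h1 : adjoint (Ring.inverse L) * adjoint L = 1 := by
    rw [← adjoint_mul', Ring.mul_inverse_cancel _ hL, adjoint_one']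
  have h2 : adjoint L * adjoint (Ring.inverse L) = 1 := by
    rw [← adjoint_mul', Ring.inverse_mul_cancel _ hL, adjoint_one']
  exact ⟨⟨adjoint L, adjoint (Ring.inverse L), h2, h1⟩, rfl⟩

lemma adjoint_cancel {T : V →L[ℝ] V} (hT : IsUnit T) (z : V) :
    adjoint T (adjoint (Ring.inverse T) z) = z := by
  have hop : adjoint T * adjoint (Ring.inverse T) = 1 := by
    rw [← adjoint_mul', Ring.inverse_mul_cancel _ hT, adjoint_one']
  have := DFunLike.congr_fun hop z
  simpa using this

set_option maxHeartbeats 2000000 in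
lemma E2_lemma {nn pp : ℕ} (ε : Fin pp → ℝ) (c : ℝ) (L ω : V →L[ℝ] V)
    (hL : IsUnit L) (hω : IsUnit ω)
    (γv : Fin nn → V) (βv : Fin pp → V) (φv : V)
    (hb : ω + adjoint ω = (∑ i, rankOne (γv i) (γv i)) + (∑ r, ε r • rankOne (βv r) (βv r)) +
      c • rankOne φv φv)
    (hc : ω * L + adjoint L * adjoint ω = ∑ r, ε r • rankOne (βv r) (βv r))
    (u w : V) :
    (∑ l, ⟪u, (Ring.inverse L * Ring.inverse ω) (γv l)⟫ *
        ⟪w, (Ring.inverse L * Ring.inverse ω) (γv l)⟫) +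
      c * (⟪u, (Ring.inverse L * Ring.inverse ω) φv⟫ *
        ⟪w, (Ring.inverse L * Ring.inverse ω) φv⟫)
      = ⟪u, (Ring.inverse L * Ring.inverse ω) ((Ring.inverse (adjoint L) - 1) w)⟫ +
        ⟪w, (Ring.inverse L * Ring.inverse ω) ((Ring.inverse (adjoint L) - 1) u)⟫ := by
  have hAL : IsUnit (adjoint L) := adjoint_isUnit hL
  have hMa : ∀ z : V, ⟪u, (Ring.inverse L * Ring.inverse ω) z⟫
      = ⟪adjoint (Ring.inverse ω) (Ring.inverse (adjoint L) u), z⟫ := by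
    intro z
    rw [ContinuousLinearMap.mul_apply,
      adjoint_inner_left (Ring.inverse ω) z (Ring.inverse (adjoint L) u),
      ring_inverse_adjoint hL, adjoint_inner_left]
  have hMb : ∀ z : V, ⟪w, (Ring.inverse L * Ring.inverse ω) z⟫
      = ⟪adjoint (Ring.inverse ω) (Ring.inverse (adjoint L) w), z⟫ := by
    intro z
    rw [ContinuousLinearMap.mul_apply,
      adjoint_inner_left (Ring.inverse ω) z (Ring.inverse (adjoint L) w),
      ring_inverse_adjoint hL, adjoint_inner_left]
  have hop : (∑ i, rankOne (γv i) (γv i)) + c • rankOne φv φv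
      = (ω + adjoint ω) - (ω * L + adjoint L * adjoint ω) := by
    rw [hb, hc]; abel
  have happ := congrArg
    (fun z => (⟪adjoint (Ring.inverse ω) (Ring.inverse (adjoint L) u), z⟫ : ℝ))
    (DFunLike.congr_fun hop (adjoint (Ring.inverse ω) (Ring.inverse (adjoint L) w)))
  simp only [ContinuousLinearMap.add_apply, ContinuousLinearMap.sub_apply,
    ContinuousLinearMap.sum_apply, ContinuousLinearMap.smul_apply, rankOne_apply',
    ContinuousLinearMap.mul_apply, inner_add_right, inner_sub_right, inner_sum,
    real_inner_smul_right] at happ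
  have hwbw : adjoint ω (adjoint (Ring.inverse ω) (Ring.inverse (adjoint L) w))
      = Ring.inverse (adjoint L) w := adjoint_cancel hω _
  rw [hwbw] at happ
  have ht4 : adjoint L (Ring.inverse (adjoint L) w) = w := cancel_left hAL w
  rw [ht4] at happ
  have ht1 : ⟪adjoint (Ring.inverse ω) (Ring.inverse (adjoint L) u),
      ω (adjoint (Ring.inverse ω) (Ring.inverse (adjoint L) w))⟫
      = (⟪Ring.inverse ω (Ring.inverse (adjoint L) u), Ring.inverse (adjoint L) w⟫ : ℝ) := by
    rw [adjoint_inner_left (Ring.inverse ω), cancel_right hω, adjoint_inner_right]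
  have ht3 : ⟪adjoint (Ring.inverse ω) (Ring.inverse (adjoint L) u),
      ω (L (adjoint (Ring.inverse ω) (Ring.inverse (adjoint L) w)))⟫
      = (⟪Ring.inverse ω u, Ring.inverse (adjoint L) w⟫ : ℝ) := by
    rw [adjoint_inner_left (Ring.inverse ω), cancel_right hω,
      ← adjoint_inner_left L (adjoint (Ring.inverse ω) (Ring.inverse (adjoint L) w))
        (Ring.inverse (adjoint L) u),
      cancel_left hAL, adjoint_inner_right]
  rw [ht1, ht3] at happ
  simp only [hMa, hMb]
  simp only [ContinuousLinearMap.sub_apply, ContinuousLinearMap.one_apply, inner_sub_right]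
  have hb1 : (⟪adjoint (Ring.inverse ω) (Ring.inverse (adjoint L) w),
      Ring.inverse (adjoint L) u⟫ : ℝ)
      = ⟪Ring.inverse ω (Ring.inverse (adjoint L) u), Ring.inverse (adjoint L) w⟫ := by
    rw [adjoint_inner_left (Ring.inverse ω)]
    exact real_inner_comm _ _
  have hb2 : (⟪adjoint (Ring.inverse ω) (Ring.inverse (adjoint L) w), u⟫ : ℝ)
      = ⟪Ring.inverse ω u, Ring.inverse (adjoint L) w⟫ := by
    rw [adjoint_inner_left (Ring.inverse ω)]
    exact real_inner_comm _ _
  rw [hb1, hb2]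
  have hsum : (∑ l, ⟪adjoint (Ring.inverse ω) (Ring.inverse (adjoint L) u), γv l⟫ *
      (⟪adjoint (Ring.inverse ω) (Ring.inverse (adjoint L) w), γv l⟫ : ℝ))
      = ∑ l, (⟪γv l, adjoint (Ring.inverse ω) (Ring.inverse (adjoint L) w)⟫ : ℝ) *
          ⟪adjoint (Ring.inverse ω) (Ring.inverse (adjoint L) u), γv l⟫ :=
    Finset.sum_congr rfl fun l _ => by
      rw [real_inner_comm (γv l) (adjoint (Ring.inverse ω) (Ring.inverse (adjoint L) w))]; ring
  rw [hsum]
  rw [real_inner_comm (adjoint (Ring.inverse ω) (Ring.inverse (adjoint L) w)) φv] at happ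
  linarith [happ]

end Aux

set_option maxHeartbeats 4000000 in
/-- the `L`-transformation of solutions of the system (CC): from a solution
`(v,h)` of (CC) with `vᵢ > 0`, a solution `(φ, γ, β)` of the linear system (R_L) and an
everywhere invertible smooth `Ω` satisfying (a), (b), (c), the functions
`ṽⱼ = vⱼ + ⟨βʲ, L⁻¹Ω⁻¹φ⟩` and `h̃ᵢᵣ = hᵢᵣ + ⟨βʳ, L⁻¹Ω⁻¹γᵢ⟩` again solve (CC) on `U`. -/
theorem stmt_12 [NormedAddCommGroup V] [InnerProductSpace ℝ V] [FiniteDimensional ℝ V]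
    [CompleteSpace V]
    (n p : ℕ) (hnp : n ≤ p) (c : ℝ) (ε : Fin p → ℝ) (hε : ∀ r, ε r = 1 ∨ ε r = -1)
    (U : Set (Fin n → ℝ)) (hUo : IsOpen U)
    (v : Fin n → (Fin n → ℝ) → ℝ) (h : Fin n → Fin p → (Fin n → ℝ) → ℝ)
    (hCC : SolvesCC n p hnp c ε U v h)
    (hv_pos : ∀ i, ∀ x ∈ U, 0 < v i x)
    (L : V →L[ℝ] V) (hL : IsUnit L)
    (φ : (Fin n → ℝ) → V) (γ : Fin n → (Fin n → ℝ) → V) (β : Fin p → (Fin n → ℝ) → V)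
    (hφ_smooth : ContDiffOn ℝ (⊤ : ℕ∞) φ U) (hγ_smooth : ∀ i, ContDiffOn ℝ (⊤ : ℕ∞) (γ i) U)
    (hβ_smooth : ∀ r, ContDiffOn ℝ (⊤ : ℕ∞) (β r) U)
    (hR1 : ∀ i, ∀ x ∈ U, fderiv ℝ φ x (Pi.single i 1) = v i x • γ i x)
    (hR2 : ∀ i j : Fin n, i ≠ j → ∀ x ∈ U,
      fderiv ℝ (γ j) x (Pi.single i 1) = h j (Fin.castLE hnp i) x • γ i x)
    (hR3 : ∀ i, ∀ x ∈ U, fderiv ℝ (γ i) x (Pi.single i 1) =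
      -(∑ j ∈ Finset.univ.erase i, h j (Fin.castLE hnp i) x • γ j x) -
        (Ring.inverse (ContinuousLinearMap.adjoint L) - 1) (β (Fin.castLE hnp i) x) -
        (c * v i x) • φ x)
    (hR4 : ∀ (i : Fin n) (r : Fin p), r ≠ Fin.castLE hnp i → ∀ x ∈ U,
      fderiv ℝ (β r) x (Pi.single i 1) = h i r x • β (Fin.castLE hnp i) x)
    (hR5 : ∀ i, ∀ x ∈ U,
      ε (Fin.castLE hnp i) • fderiv ℝ (β (Fin.castLE hnp i)) x (Pi.single i 1) =
        -γ i x - ∑ r ∈ Finset.univ.erase (Fin.castLE hnp i), (ε r * h i r x) • β r x)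
    (Ω : (Fin n → ℝ) → (V →L[ℝ] V))
    (hΩ_smooth : ContDiffOn ℝ (⊤ : ℕ∞) Ω U)
    (hΩinv : ∀ x ∈ U, IsUnit (Ω x))
    (hΩa : ∀ i, ∀ x ∈ U, ∀ w : V,
      (fderiv ℝ Ω x (Pi.single i 1)) w =
        -(⟪(Ring.inverse (ContinuousLinearMap.adjoint L)) (β (Fin.castLE hnp i) x), w⟫) •
          γ i x)
    (hΩb : ∀ x ∈ U,
      Ω x + ContinuousLinearMap.adjoint (Ω x) =
        (∑ i, rankOne (γ i x) (γ i x)) + (∑ r, ε r • rankOne (β r x) (β r x)) +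
          c • rankOne (φ x) (φ x))
    (hΩc : ∀ x ∈ U,
      Ω x * L + ContinuousLinearMap.adjoint L * ContinuousLinearMap.adjoint (Ω x) =
        ∑ r, ε r • rankOne (β r x) (β r x)) :
    SolvesCC n p hnp c ε U
      (fun j x => v j x +
        ⟪β (Fin.castLE hnp j) x, (Ring.inverse L * Ring.inverse (Ω x)) (φ x)⟫)
      (fun i r x => h i r x +
        ⟪β r x, (Ring.inverse L * Ring.inverse (Ω x)) (γ i x)⟫) := by
    classical
  obtain ⟨hv_s, hh_s, cc1, cc2, cc3, cc4⟩ := hCC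
  -- smoothness of the inverse of Ω
  have hρ_s : ContDiffOn ℝ (⊤ : ℕ∞) (fun x => Ring.inverse (Ω x)) U := by
    intro x hx
    have h1 : ContDiffAt ℝ (⊤ : ℕ∞) (Ring.inverse : (V →L[ℝ] V) → (V →L[ℝ] V)) (Ω x) := by
      have h2 := contDiffAt_ringInverse ℝ (n := (⊤ : ℕ∞)) ((hΩinv x hx).unit)
      rwa [(hΩinv x hx).unit_spec] at h2
    exact (h1.comp x (hΩ_smooth.contDiffAt (hUo.mem_nhds hx))).contDiffWithinAt
  have hM_s : ContDiffOn ℝ (⊤ : ℕ∞) (fun x => Ring.inverse L * Ring.inverse (Ω x)) U :=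
    contDiffOn_const.mul hρ_s
  have hS_s : ∀ (i : Fin n) (r : Fin p), ContDiffOn ℝ (⊤ : ℕ∞)
      (fun x => ⟪β r x, (Ring.inverse L * Ring.inverse (Ω x)) (γ i x)⟫) U :=
    fun i r => ContDiffOn.inner ℝ (hβ_smooth r) (hM_s.clm_apply (hγ_smooth i))
  have hT_s : ∀ (j : Fin n), ContDiffOn ℝ (⊤ : ℕ∞)
      (fun x => ⟪β (Fin.castLE hnp j) x, (Ring.inverse L * Ring.inverse (Ω x)) (φ x)⟫) U :=
    fun j => ContDiffOn.inner ℝ (hβ_smooth _) (hM_s.clm_apply hφ_smooth)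
  have hS_d : ∀ (i : Fin n) (r : Fin p) (x : Fin n → ℝ), x ∈ U → DifferentiableAt ℝ
      (fun x => ⟪β r x, (Ring.inverse L * Ring.inverse (Ω x)) (γ i x)⟫) x :=
    fun i r x hx => diffOn_at hUo (hS_s i r) hx
  have hT_d : ∀ (j : Fin n) (x : Fin n → ℝ), x ∈ U → DifferentiableAt ℝ
      (fun x => ⟪β (Fin.castLE hnp j) x, (Ring.inverse L * Ring.inverse (Ω x)) (φ x)⟫) x :=
    fun j x hx => diffOn_at hUo (hT_s j) hx
  have hv_d : ∀ (i : Fin n) (x : Fin n → ℝ), x ∈ U → DifferentiableAt ℝ (v i) x :=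
    fun i x hx => diffOn_at hUo (hv_s i) hx
  have hh_d : ∀ (i : Fin n) (r : Fin p), r ≠ Fin.castLE hnp i → ∀ (x : Fin n → ℝ), x ∈ U →
      DifferentiableAt ℝ (h i r) x :=
    fun i r hr x hx => diffOn_at hUo (hh_s i r hr) hx
  -- the master derivative formula
  have key : ∀ (b y : (Fin n → ℝ) → V), ContDiffOn ℝ (⊤ : ℕ∞) b U → ContDiffOn ℝ (⊤ : ℕ∞) y U →
      ∀ x ∈ U, ∀ k : Fin n,
      fderiv ℝ (fun z => ⟪b z, (Ring.inverse L * Ring.inverse (Ω z)) (y z)⟫) x (Pi.single k 1)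
        = ⟪fderiv ℝ b x (Pi.single k 1), (Ring.inverse L * Ring.inverse (Ω x)) (y x)⟫
          + ⟪β (Fin.castLE hnp k) x, (Ring.inverse L * Ring.inverse (Ω x)) (y x)⟫
              * ⟪b x, (Ring.inverse L * Ring.inverse (Ω x)) (γ k x)⟫
          + ⟪b x, (Ring.inverse L * Ring.inverse (Ω x)) (fderiv ℝ y x (Pi.single k 1))⟫ :=
    fun b y hb hy x hx k =>
      key_deriv hUo L hL Ω hΩ_smooth hΩinv (fun k x => β (Fin.castLE hnp k) x)
        (fun k x => γ k x) (fun k x hx w => hΩa k x hx w) b y hb hy hx k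
  refine ⟨?_, ?_, ?_, ?_, ?_, ?_⟩
  · exact fun i => (hv_s i).add (hT_s i)
  · exact fun i r hr => (hh_s i r hr).add (hS_s i r)
  · -- CC1
    intro i j hij x hx
    have hd := fderiv_fun_add (𝕜 := ℝ) (hv_d i x hx) (hT_d i x hx)
    rw [hd]
    rw [ContinuousLinearMap.add_apply, cc1 i j hij x hx,
      key (β (Fin.castLE hnp i)) φ (hβ_smooth _) hφ_smooth x hx j,
      hR4 j (Fin.castLE hnp i) (fun hc => hij (Fin.castLE_inj.mp hc)) x hx,
      hR1 j x hx]
    rw [real_inner_smul_left, map_smul, inner_smul_right]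
    ring
  · -- CC2
    intro i j hij x hx
    have hji : j ≠ i := hij.symm
    have hcji : Fin.castLE hnp j ≠ Fin.castLE hnp i := fun hc => hji (Fin.castLE_inj.mp hc)
    have hcij : Fin.castLE hnp i ≠ Fin.castLE hnp j := fun hc => hij (Fin.castLE_inj.mp hc)
    rw [fderiv_fun_add (𝕜 := ℝ) (hh_d i (Fin.castLE hnp j) hcji x hx) (hS_d i (Fin.castLE hnp j) x hx),
      fderiv_fun_add (𝕜 := ℝ) (hh_d j (Fin.castLE hnp i) hcij x hx) (hS_d j (Fin.castLE hnp i) x hx),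
      ContinuousLinearMap.add_apply, ContinuousLinearMap.add_apply]
    have d1 : fderiv ℝ (fun z => ⟪β (Fin.castLE hnp j) z,
          (Ring.inverse L * Ring.inverse (Ω z)) (γ i z)⟫) x (Pi.single i 1)
        = h i (Fin.castLE hnp j) x * ⟪β (Fin.castLE hnp i) x, (Ring.inverse L * Ring.inverse (Ω x)) (γ i x)⟫
          + ⟪β (Fin.castLE hnp i) x, (Ring.inverse L * Ring.inverse (Ω x)) (γ i x)⟫ * ⟪β (Fin.castLE hnp j) x, (Ring.inverse L * Ring.inverse (Ω x)) (γ i x)⟫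
          - (∑ l ∈ Finset.univ.erase i, h l (Fin.castLE hnp i) x * ⟪β (Fin.castLE hnp j) x, (Ring.inverse L * Ring.inverse (Ω x)) (γ l x)⟫)
          - ⟪β (Fin.castLE hnp j) x, (Ring.inverse L * Ring.inverse (Ω x)) ((Ring.inverse (ContinuousLinearMap.adjoint L) - 1) (β (Fin.castLE hnp i) x))⟫
          - c * v i x * ⟪β (Fin.castLE hnp j) x, (Ring.inverse L * Ring.inverse (Ω x)) (φ x)⟫ := by
      rw [key (β (Fin.castLE hnp j)) (γ i) (hβ_smooth _) (hγ_smooth i) x hx i,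
        hR4 i (Fin.castLE hnp j) hcji x hx, hR3 i x hx]
      rw [real_inner_smul_left]
      simp only [map_sub, map_neg, map_smul, map_sum, inner_sub_right, inner_neg_right,
        inner_smul_right, inner_sum]
      ring
    have d2 : fderiv ℝ (fun z => ⟪β (Fin.castLE hnp i) z,
          (Ring.inverse L * Ring.inverse (Ω z)) (γ j z)⟫) x (Pi.single j 1)
        = h j (Fin.castLE hnp i) x * ⟪β (Fin.castLE hnp j) x, (Ring.inverse L * Ring.inverse (Ω x)) (γ j x)⟫
          + ⟪β (Fin.castLE hnp j) x, (Ring.inverse L * Ring.inverse (Ω x)) (γ j x)⟫ * ⟪β (Fin.castLE hnp i) x, (Ring.inverse L * Ring.inverse (Ω x)) (γ j x)⟫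
          - (∑ l ∈ Finset.univ.erase j, h l (Fin.castLE hnp j) x * ⟪β (Fin.castLE hnp i) x, (Ring.inverse L * Ring.inverse (Ω x)) (γ l x)⟫)
          - ⟪β (Fin.castLE hnp i) x, (Ring.inverse L * Ring.inverse (Ω x)) ((Ring.inverse (ContinuousLinearMap.adjoint L) - 1) (β (Fin.castLE hnp j) x))⟫
          - c * v j x * ⟪β (Fin.castLE hnp i) x, (Ring.inverse L * Ring.inverse (Ω x)) (φ x)⟫ := by
      rw [key (β (Fin.castLE hnp i)) (γ j) (hβ_smooth _) (hγ_smooth j) x hx j,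
        hR4 j (Fin.castLE hnp i) hcij x hx, hR3 j x hx]
      rw [real_inner_smul_left]
      simp only [map_sub, map_neg, map_smul, map_sum, inner_sub_right, inner_neg_right,
        inner_smul_right, inner_sum]
      ring
    have hjmem : j ∈ Finset.univ.erase i := Finset.mem_erase.mpr ⟨hji, Finset.mem_univ j⟩
    have himem : i ∈ (Finset.univ.erase j) := Finset.mem_erase.mpr ⟨hij, Finset.mem_univ i⟩
    have hsplit1 : (∑ l ∈ (Finset.univ.erase i).erase j, h l (Fin.castLE hnp i) x *
          ⟪β (Fin.castLE hnp j) x, (Ring.inverse L * Ring.inverse (Ω x)) (γ l x)⟫)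
          + h j (Fin.castLE hnp i) x * ⟪β (Fin.castLE hnp j) x, (Ring.inverse L * Ring.inverse (Ω x)) (γ j x)⟫
        = ∑ l ∈ Finset.univ.erase i, h l (Fin.castLE hnp i) x * ⟪β (Fin.castLE hnp j) x, (Ring.inverse L * Ring.inverse (Ω x)) (γ l x)⟫ :=
      Finset.sum_erase_add _ _ hjmem
    have hsplit2 : (∑ l ∈ (Finset.univ.erase i).erase j, h l (Fin.castLE hnp j) x *
          ⟪β (Fin.castLE hnp i) x, (Ring.inverse L * Ring.inverse (Ω x)) (γ l x)⟫)
          + h i (Fin.castLE hnp j) x * ⟪β (Fin.castLE hnp i) x, (Ring.inverse L * Ring.inverse (Ω x)) (γ i x)⟫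
        = ∑ l ∈ Finset.univ.erase j, h l (Fin.castLE hnp j) x * ⟪β (Fin.castLE hnp i) x, (Ring.inverse L * Ring.inverse (Ω x)) (γ l x)⟫ := by
      rw [Finset.erase_right_comm]
      exact Finset.sum_erase_add _ _ himem
    have e1 : (∑ l ∈ Finset.univ.erase i,
          ⟪β (Fin.castLE hnp i) x, (Ring.inverse L * Ring.inverse (Ω x)) (γ l x)⟫ * ⟪β (Fin.castLE hnp j) x, (Ring.inverse L * Ring.inverse (Ω x)) (γ l x)⟫)
          + ⟪β (Fin.castLE hnp i) x, (Ring.inverse L * Ring.inverse (Ω x)) (γ i x)⟫ * ⟪β (Fin.castLE hnp j) x, (Ring.inverse L * Ring.inverse (Ω x)) (γ i x)⟫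
        = ∑ l : Fin n, ⟪β (Fin.castLE hnp i) x, (Ring.inverse L * Ring.inverse (Ω x)) (γ l x)⟫ * ⟪β (Fin.castLE hnp j) x, (Ring.inverse L * Ring.inverse (Ω x)) (γ l x)⟫ :=
      Finset.sum_erase_add _ _ (Finset.mem_univ i)
    have e2 : (∑ l ∈ (Finset.univ.erase i).erase j,
          ⟪β (Fin.castLE hnp i) x, (Ring.inverse L * Ring.inverse (Ω x)) (γ l x)⟫ * ⟪β (Fin.castLE hnp j) x, (Ring.inverse L * Ring.inverse (Ω x)) (γ l x)⟫)
          + ⟪β (Fin.castLE hnp i) x, (Ring.inverse L * Ring.inverse (Ω x)) (γ j x)⟫ * ⟪β (Fin.castLE hnp j) x, (Ring.inverse L * Ring.inverse (Ω x)) (γ j x)⟫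
        = ∑ l ∈ Finset.univ.erase i,
            ⟪β (Fin.castLE hnp i) x, (Ring.inverse L * Ring.inverse (Ω x)) (γ l x)⟫ * ⟪β (Fin.castLE hnp j) x, (Ring.inverse L * Ring.inverse (Ω x)) (γ l x)⟫ :=
      Finset.sum_erase_add _ _ hjmem
    have E2' := E2_lemma ε c L (Ω x) hL (hΩinv x hx) (fun l => γ l x) (fun r => β r x)
      (φ x) (hΩb x hx) (hΩc x hx) (β (Fin.castLE hnp i) x) (β (Fin.castLE hnp j) x)
    beta_reduce at E2'
    have hexp : (∑ l ∈ (Finset.univ.erase i).erase j,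
          (h l (Fin.castLE hnp i) x + ⟪β (Fin.castLE hnp i) x, (Ring.inverse L * Ring.inverse (Ω x)) (γ l x)⟫) *
          (h l (Fin.castLE hnp j) x + ⟪β (Fin.castLE hnp j) x, (Ring.inverse L * Ring.inverse (Ω x)) (γ l x)⟫))
        = (∑ l ∈ (Finset.univ.erase i).erase j, h l (Fin.castLE hnp i) x * h l (Fin.castLE hnp j) x)
          + (∑ l ∈ (Finset.univ.erase i).erase j, h l (Fin.castLE hnp i) x * ⟪β (Fin.castLE hnp j) x, (Ring.inverse L * Ring.inverse (Ω x)) (γ l x)⟫)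
          + (∑ l ∈ (Finset.univ.erase i).erase j, h l (Fin.castLE hnp j) x * ⟪β (Fin.castLE hnp i) x, (Ring.inverse L * Ring.inverse (Ω x)) (γ l x)⟫)
          + (∑ l ∈ (Finset.univ.erase i).erase j,
              ⟪β (Fin.castLE hnp i) x, (Ring.inverse L * Ring.inverse (Ω x)) (γ l x)⟫ * ⟪β (Fin.castLE hnp j) x, (Ring.inverse L * Ring.inverse (Ω x)) (γ l x)⟫) := by
      rw [← Finset.sum_add_distrib, ← Finset.sum_add_distrib, ← Finset.sum_add_distrib]
      exact Finset.sum_congr rfl fun l _ => by ring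
    linear_combination (cc2 i j hij x hx) + d1 + d2 + hexp + hsplit1 + hsplit2 + e1 + e2 + E2'
  · -- CC3
    intro i j r hij hri hrj x hx
    have hd := fderiv_fun_add (𝕜 := ℝ) (hh_d i r hri x hx) (hS_d i r x hx)
    rw [hd, ContinuousLinearMap.add_apply, cc3 i j r hij hri hrj x hx,
      key (β r) (γ i) (hβ_smooth r) (hγ_smooth i) x hx j,
      hR4 j r hrj x hx,
      hR2 j i hij.symm x hx]
    rw [real_inner_smul_left, map_smul, inner_smul_right]
    ring
  · -- CC4
    intro i j hij x hx
    have hji : j ≠ i := hij.symm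
    have hcji : Fin.castLE hnp j ≠ Fin.castLE hnp i := fun hc => hji (Fin.castLE_inj.mp hc)
    have hcij : Fin.castLE hnp i ≠ Fin.castLE hnp j := fun hc => hij (Fin.castLE_inj.mp hc)
    rw [fderiv_fun_add (𝕜 := ℝ) (hh_d i (Fin.castLE hnp j) hcji x hx) (hS_d i (Fin.castLE hnp j) x hx),
      fderiv_fun_add (𝕜 := ℝ) (hh_d j (Fin.castLE hnp i) hcij x hx) (hS_d j (Fin.castLE hnp i) x hx),
      ContinuousLinearMap.add_apply, ContinuousLinearMap.add_apply]
    have d1 : ε (Fin.castLE hnp j) * fderiv ℝ (fun z => ⟪β (Fin.castLE hnp j) z,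
          (Ring.inverse L * Ring.inverse (Ω z)) (γ i z)⟫) x (Pi.single j 1)
        = -⟪γ j x, (Ring.inverse L * Ring.inverse (Ω x)) (γ i x)⟫
          - (∑ r ∈ Finset.univ.erase (Fin.castLE hnp j), (ε r * h j r x) * ⟪β r x, (Ring.inverse L * Ring.inverse (Ω x)) (γ i x)⟫)
          + ε (Fin.castLE hnp j) * (⟪β (Fin.castLE hnp j) x, (Ring.inverse L * Ring.inverse (Ω x)) (γ i x)⟫ * ⟪β (Fin.castLE hnp j) x, (Ring.inverse L * Ring.inverse (Ω x)) (γ j x)⟫)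
          + ε (Fin.castLE hnp j) * (h i (Fin.castLE hnp j) x * ⟪β (Fin.castLE hnp j) x, (Ring.inverse L * Ring.inverse (Ω x)) (γ j x)⟫) := by
      rw [key (β (Fin.castLE hnp j)) (γ i) (hβ_smooth _) (hγ_smooth i) x hx j,
        hR2 j i hji x hx]
      rw [mul_add, mul_add,
        show ε (Fin.castLE hnp j) * ⟪fderiv ℝ (β (Fin.castLE hnp j)) x (Pi.single j 1), (Ring.inverse L * Ring.inverse (Ω x)) (γ i x)⟫
          = ⟪-γ j x - ∑ r ∈ Finset.univ.erase (Fin.castLE hnp j), (ε r * h j r x) • β r x,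
              (Ring.inverse L * Ring.inverse (Ω x)) (γ i x)⟫ from by rw [← real_inner_smul_left, hR5 j x hx]]
      simp only [inner_sub_left, inner_neg_left, sum_inner, real_inner_smul_left,
        map_smul, inner_smul_right]
    have d2 : ε (Fin.castLE hnp i) * fderiv ℝ (fun z => ⟪β (Fin.castLE hnp i) z,
          (Ring.inverse L * Ring.inverse (Ω z)) (γ j z)⟫) x (Pi.single i 1)
        = -⟪γ i x, (Ring.inverse L * Ring.inverse (Ω x)) (γ j x)⟫
          - (∑ r ∈ Finset.univ.erase (Fin.castLE hnp i), (ε r * h i r x) * ⟪β r x, (Ring.inverse L * Ring.inverse (Ω x)) (γ j x)⟫)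
          + ε (Fin.castLE hnp i) * (⟪β (Fin.castLE hnp i) x, (Ring.inverse L * Ring.inverse (Ω x)) (γ j x)⟫ * ⟪β (Fin.castLE hnp i) x, (Ring.inverse L * Ring.inverse (Ω x)) (γ i x)⟫)
          + ε (Fin.castLE hnp i) * (h j (Fin.castLE hnp i) x * ⟪β (Fin.castLE hnp i) x, (Ring.inverse L * Ring.inverse (Ω x)) (γ i x)⟫) := by
      rw [key (β (Fin.castLE hnp i)) (γ j) (hβ_smooth _) (hγ_smooth j) x hx i,
        hR2 i j hij x hx]
      rw [mul_add, mul_add,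
        show ε (Fin.castLE hnp i) * ⟪fderiv ℝ (β (Fin.castLE hnp i)) x (Pi.single i 1), (Ring.inverse L * Ring.inverse (Ω x)) (γ j x)⟫
          = ⟪-γ i x - ∑ r ∈ Finset.univ.erase (Fin.castLE hnp i), (ε r * h i r x) • β r x,
              (Ring.inverse L * Ring.inverse (Ω x)) (γ j x)⟫ from by rw [← real_inner_smul_left, hR5 i x hx]]
      simp only [inner_sub_left, inner_neg_left, sum_inner, real_inner_smul_left,
        map_smul, inner_smul_right]
    have hcjmem : (Fin.castLE hnp j) ∈ Finset.univ.erase (Fin.castLE hnp i) :=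
      Finset.mem_erase.mpr ⟨hcji, Finset.mem_univ _⟩
    have hcimem : (Fin.castLE hnp i) ∈ Finset.univ.erase (Fin.castLE hnp j) :=
      Finset.mem_erase.mpr ⟨hcij, Finset.mem_univ _⟩
    have hsplit1 : (∑ r ∈ (Finset.univ.erase (Fin.castLE hnp i)).erase (Fin.castLE hnp j),
          (ε r * h j r x) * ⟪β r x, (Ring.inverse L * Ring.inverse (Ω x)) (γ i x)⟫)
          + (ε (Fin.castLE hnp i) * h j (Fin.castLE hnp i) x) * ⟪β (Fin.castLE hnp i) x, (Ring.inverse L * Ring.inverse (Ω x)) (γ i x)⟫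
        = ∑ r ∈ Finset.univ.erase (Fin.castLE hnp j), (ε r * h j r x) * ⟪β r x, (Ring.inverse L * Ring.inverse (Ω x)) (γ i x)⟫ := by
      rw [Finset.erase_right_comm]
      exact Finset.sum_erase_add _ _ hcimem
    have hsplit2 : (∑ r ∈ (Finset.univ.erase (Fin.castLE hnp i)).erase (Fin.castLE hnp j),
          (ε r * h i r x) * ⟪β r x, (Ring.inverse L * Ring.inverse (Ω x)) (γ j x)⟫)
          + (ε (Fin.castLE hnp j) * h i (Fin.castLE hnp j) x) * ⟪β (Fin.castLE hnp j) x, (Ring.inverse L * Ring.inverse (Ω x)) (γ j x)⟫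
        = ∑ r ∈ Finset.univ.erase (Fin.castLE hnp i), (ε r * h i r x) * ⟪β r x, (Ring.inverse L * Ring.inverse (Ω x)) (γ j x)⟫ :=
      Finset.sum_erase_add _ _ hcjmem
    have e1 : (∑ r ∈ Finset.univ.erase (Fin.castLE hnp i),
          ε r * (⟪β r x, (Ring.inverse L * Ring.inverse (Ω x)) (γ i x)⟫ * ⟪β r x, (Ring.inverse L * Ring.inverse (Ω x)) (γ j x)⟫))
          + ε (Fin.castLE hnp i) * (⟪β (Fin.castLE hnp i) x, (Ring.inverse L * Ring.inverse (Ω x)) (γ i x)⟫ * ⟪β (Fin.castLE hnp i) x, (Ring.inverse L * Ring.inverse (Ω x)) (γ j x)⟫)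
        = ∑ r : Fin p, ε r * (⟪β r x, (Ring.inverse L * Ring.inverse (Ω x)) (γ i x)⟫ * ⟪β r x, (Ring.inverse L * Ring.inverse (Ω x)) (γ j x)⟫) :=
      Finset.sum_erase_add _ _ (Finset.mem_univ _)
    have e2 : (∑ r ∈ (Finset.univ.erase (Fin.castLE hnp i)).erase (Fin.castLE hnp j),
          ε r * (⟪β r x, (Ring.inverse L * Ring.inverse (Ω x)) (γ i x)⟫ * ⟪β r x, (Ring.inverse L * Ring.inverse (Ω x)) (γ j x)⟫))
          + ε (Fin.castLE hnp j) * (⟪β (Fin.castLE hnp j) x, (Ring.inverse L * Ring.inverse (Ω x)) (γ i x)⟫ * ⟪β (Fin.castLE hnp j) x, (Ring.inverse L * Ring.inverse (Ω x)) (γ j x)⟫)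
        = ∑ r ∈ Finset.univ.erase (Fin.castLE hnp i),
            ε r * (⟪β r x, (Ring.inverse L * Ring.inverse (Ω x)) (γ i x)⟫ * ⟪β r x, (Ring.inverse L * Ring.inverse (Ω x)) (γ j x)⟫) :=
      Finset.sum_erase_add _ _ hcjmem
    have E3' := E3_lemma ε L (Ω x) hL (hΩinv x hx) (fun r => β r x) (hΩc x hx)
      (γ i x) (γ j x)
    beta_reduce at E3'
    have hexp : (∑ r ∈ (Finset.univ.erase (Fin.castLE hnp i)).erase (Fin.castLE hnp j),
          ε r * ((h i r x + ⟪β r x, (Ring.inverse L * Ring.inverse (Ω x)) (γ i x)⟫) * (h j r x + ⟪β r x, (Ring.inverse L * Ring.inverse (Ω x)) (γ j x)⟫)))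
        = (∑ r ∈ (Finset.univ.erase (Fin.castLE hnp i)).erase (Fin.castLE hnp j), ε r * (h i r x * h j r x))
          + (∑ r ∈ (Finset.univ.erase (Fin.castLE hnp i)).erase (Fin.castLE hnp j),
              (ε r * h i r x) * ⟪β r x, (Ring.inverse L * Ring.inverse (Ω x)) (γ j x)⟫)
          + (∑ r ∈ (Finset.univ.erase (Fin.castLE hnp i)).erase (Fin.castLE hnp j),
              (ε r * h j r x) * ⟪β r x, (Ring.inverse L * Ring.inverse (Ω x)) (γ i x)⟫)
          + (∑ r ∈ (Finset.univ.erase (Fin.castLE hnp i)).erase (Fin.castLE hnp j),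
              ε r * (⟪β r x, (Ring.inverse L * Ring.inverse (Ω x)) (γ i x)⟫ * ⟪β r x, (Ring.inverse L * Ring.inverse (Ω x)) (γ j x)⟫)) := by
      rw [← Finset.sum_add_distrib, ← Finset.sum_add_distrib, ← Finset.sum_add_distrib]
      exact Finset.sum_congr rfl fun r _ => by ring
    linear_combination (cc4 i j hij x hx) + d1 + d2 + hexp + hsplit1 + hsplit2 + e1 + e2 - E3'
end

section
/- Let c, c̃ ∈ ℝ with (c,c̃) ∈ D(c,c̃) and (c,c̃) ≠ (0,0), and let α ∈ ℝ. Then the three real numbers 1 − α, −α, and −((c − c̃) + α·c̃) are neither all positive nor all negative if and only if α ∈ Z(c,c̃). Equivalently, the equation (1−α)x² − αy² − ((c−c̃) + αc̃)z² = 0 admits a solution (x,y,z) ∈ ℝ³ with (x,y,z) ≠ (0,0,0) if and only if α ∈ Z(c,c̃). -/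
/-- The set `Z(c,c̃)` from the paper (with `κ = (c̃ - c)/c̃` when `c̃ ≠ 0`). -/
noncomputable def Zset (c ct : ℝ) : Set ℝ :=
  if c ≥ ct ∧ ct > 0 then Set.Icc ((ct - c) / ct) 1
  else if 0 ≤ c ∧ c < ct then Set.Icc 0 1
  else if c < 0 ∧ 0 < ct then Set.Icc 0 ((ct - c) / ct)
  else if c < ct ∧ ct < 0 then Set.Iic ((ct - c) / ct) ∪ Set.Ici 0
  else if ct < 0 ∧ 0 < c then Set.Iic 1 ∪ Set.Ici ((ct - c) / ct)
  else if ct = 0 ∧ 0 < c then Set.Iic 1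
  else if c < 0 ∧ ct = 0 then Set.Ici 0
  else ∅


lemma mixed_sol (a b : ℝ) (ha : 0 < a) (hb : b < 0) :
    ∃ x y : ℝ, x ≠ 0 ∧ a * x ^ 2 + b * y ^ 2 = 0 := by
  refine ⟨Real.sqrt (-b), Real.sqrt a, ?_, ?_⟩
  · exact (Real.sqrt_pos.mpr (by linarith)).ne'
  · rw [Real.sq_sqrt (by linarith), Real.sq_sqrt (by linarith)]
    ring

lemma sol_iff (a b c : ℝ) :
    (∃ x y z : ℝ, ¬ (x = 0 ∧ y = 0 ∧ z = 0) ∧ a * x ^ 2 + b * y ^ 2 + c * z ^ 2 = 0) ↔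
      (¬ (0 < a ∧ 0 < b ∧ 0 < c) ∧ ¬ (a < 0 ∧ b < 0 ∧ c < 0)) := by
  constructor
  · rintro ⟨x, y, z, hnt, heq⟩
    have hx : x ≠ 0 ∨ y ≠ 0 ∨ z ≠ 0 := by tauto
    constructor
    · rintro ⟨ha, hb, hc⟩
      rcases hx with h | h | h <;>
        nlinarith [sq_nonneg x, sq_nonneg y, sq_nonneg z, pow_two_pos_of_ne_zero h]
    · rintro ⟨ha, hb, hc⟩
      rcases hx with h | h | h <;>
        nlinarith [sq_nonneg x, sq_nonneg y, sq_nonneg z, pow_two_pos_of_ne_zero h]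
  · rintro ⟨h1, h2⟩
    by_cases ha0 : a = 0
    · exact ⟨1, 0, 0, by simp, by simp [ha0]⟩
    by_cases hb0 : b = 0
    · exact ⟨0, 1, 0, by simp, by simp [hb0]⟩
    by_cases hc0 : c = 0
    · exact ⟨0, 0, 1, by simp, by simp [hc0]⟩
    rcases lt_or_gt_of_ne ha0 with ha | ha <;> rcases lt_or_gt_of_ne hb0 with hb | hb <;>
      rcases lt_or_gt_of_ne hc0 with hc | hc
    · exact absurd ⟨ha, hb, hc⟩ h2
    · obtain ⟨x, z, hx, h⟩ := mixed_sol c a hc ha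
      exact ⟨z, 0, x, by simp [hx], by nlinarith⟩
    · obtain ⟨x, y, hx, h⟩ := mixed_sol b a hb ha
      exact ⟨y, x, 0, by simp [hx], by nlinarith⟩
    · obtain ⟨x, y, hx, h⟩ := mixed_sol b a hb ha
      exact ⟨y, x, 0, by simp [hx], by nlinarith⟩
    · obtain ⟨x, y, hx, h⟩ := mixed_sol a b ha hb
      exact ⟨x, y, 0, by simp [hx], by nlinarith⟩
    · obtain ⟨x, y, hx, h⟩ := mixed_sol a b ha hb
      exact ⟨x, y, 0, by simp [hx], by nlinarith⟩
    · obtain ⟨x, z, hx, h⟩ := mixed_sol a c ha hc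
      exact ⟨x, 0, z, by simp [hx], by nlinarith⟩
    · exact absurd ⟨ha, hb, hc⟩ h1

lemma key (c ct α : ℝ)
    (hD : ¬ (ct < 0 ∧ ct ≤ c ∧ c ≤ 0))
    (hne : ¬ (c = 0 ∧ ct = 0)) :
    (¬ (0 < 1 - α ∧ 0 < -α ∧ 0 < -((c - ct) + α * ct)) ∧
      ¬ (1 - α < 0 ∧ -α < 0 ∧ -((c - ct) + α * ct) < 0)) ↔ α ∈ Zset c ct := by
  unfold Zset
  split_ifs with h1 h2 h3 h4 h5 h6 h7
  · obtain ⟨hc, hct⟩ := h1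
    rw [Set.mem_Icc, div_le_iff₀ hct]
    constructor
    · rintro ⟨hA, hB⟩
      constructor
      · by_contra hx; push_neg at hx
        exact hA ⟨by nlinarith, by nlinarith, by nlinarith⟩
      · by_contra hx; push_neg at hx
        exact hB ⟨by nlinarith, by nlinarith, by nlinarith⟩
    · rintro ⟨ha, hb⟩
      constructor
      · rintro ⟨u, v, w⟩; nlinarith
      · rintro ⟨u, v, w⟩; nlinarith
  · obtain ⟨hc, hct⟩ := h2
    rw [Set.mem_Icc]
    constructor
    · rintro ⟨hA, hB⟩
      constructor
      · by_contra hx; push_neg at hx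
        exact hA ⟨by nlinarith, by nlinarith, by nlinarith⟩
      · by_contra hx; push_neg at hx
        exact hB ⟨by nlinarith, by nlinarith, by nlinarith⟩
    · rintro ⟨ha, hb⟩
      constructor
      · rintro ⟨u, v, w⟩; nlinarith
      · rintro ⟨u, v, w⟩; nlinarith
  · obtain ⟨hc, hct⟩ := h3
    rw [Set.mem_Icc, le_div_iff₀ hct]
    constructor
    · rintro ⟨hA, hB⟩
      constructor
      · by_contra hx; push_neg at hx
        exact hA ⟨by nlinarith, by nlinarith, by nlinarith⟩
      · by_contra hx; push_neg at hx
        exact hB ⟨by nlinarith, by nlinarith, by nlinarith⟩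
    · rintro ⟨ha, hb⟩
      constructor
      · rintro ⟨u, v, w⟩; nlinarith
      · rintro ⟨u, v, w⟩; nlinarith
  · obtain ⟨hc, hct⟩ := h4
    simp only [Set.mem_union, Set.mem_Iic, Set.mem_Ici, le_div_iff_of_neg hct]
    constructor
    · rintro ⟨hA, hB⟩
      by_contra hx; push_neg at hx
      exact hA ⟨by nlinarith [hx.1, hx.2], by nlinarith [hx.1, hx.2],
        by nlinarith [hx.1, hx.2]⟩
    · rintro (h | h)
      · constructor
        · rintro ⟨u, v, w⟩; nlinarith
        · rintro ⟨u, v, w⟩; nlinarith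
      · constructor
        · rintro ⟨u, v, w⟩; nlinarith
        · rintro ⟨u, v, w⟩; nlinarith
  · obtain ⟨hct, hc⟩ := h5
    simp only [Set.mem_union, Set.mem_Iic, Set.mem_Ici, div_le_iff_of_neg hct]
    constructor
    · rintro ⟨hA, hB⟩
      by_contra hx; push_neg at hx
      exact hB ⟨by nlinarith [hx.1, hx.2], by nlinarith [hx.1, hx.2],
        by nlinarith [hx.1, hx.2]⟩
    · rintro (h | h)
      · constructor
        · rintro ⟨u, v, w⟩; nlinarith
        · rintro ⟨u, v, w⟩; nlinarith
      · constructor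
        · rintro ⟨u, v, w⟩; nlinarith
        · rintro ⟨u, v, w⟩; nlinarith
  · obtain ⟨hct, hc⟩ := h6
    subst hct
    rw [Set.mem_Iic]
    constructor
    · rintro ⟨hA, hB⟩
      by_contra hx; push_neg at hx
      exact hB ⟨by nlinarith, by nlinarith, by nlinarith⟩
    · intro h
      constructor
      · rintro ⟨u, v, w⟩; nlinarith
      · rintro ⟨u, v, w⟩; nlinarith
  · obtain ⟨hc, hct⟩ := h7
    subst hct
    rw [Set.mem_Ici]
    constructor
    · rintro ⟨hA, hB⟩
      by_contra hx; push_neg at hx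
      exact hA ⟨by nlinarith, by nlinarith, by nlinarith⟩
    · intro h
      constructor
      · rintro ⟨u, v, w⟩; nlinarith
      · rintro ⟨u, v, w⟩; nlinarith
  · exfalso
    rcases lt_trichotomy ct 0 with h | h | h <;>
      rcases lt_trichotomy c 0 with h' | h' | h' <;>
      simp_all <;> try linarith

/-- for `(c,c̃) ∈ D(c,c̃)`, `(c,c̃) ≠ (0,0)` and `α ∈ ℝ`, the numbers
`1 - α`, `-α`, `-((c - c̃) + α·c̃)` are neither all positive nor all negative iff
`α ∈ Z(c,c̃)`; equivalently, the diagonal quadratic form with these coefficients has a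
nontrivial real zero iff `α ∈ Z(c,c̃)`. -/
theorem stmt_16 (c ct α : ℝ)
    (hD : ¬ (ct < 0 ∧ ct ≤ c ∧ c ≤ 0))
    (hne : ¬ (c = 0 ∧ ct = 0)) :
    ((¬ (0 < 1 - α ∧ 0 < -α ∧ 0 < -((c - ct) + α * ct)) ∧
      ¬ (1 - α < 0 ∧ -α < 0 ∧ -((c - ct) + α * ct) < 0)) ↔ α ∈ Zset c ct) ∧
    ((∃ x y z : ℝ, ¬ (x = 0 ∧ y = 0 ∧ z = 0) ∧
        (1 - α) * x ^ 2 - α * y ^ 2 - ((c - ct) + α * ct) * z ^ 2 = 0) ↔ α ∈ Zset c ct) := by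
  have h1 := key c ct α hD hne
  refine ⟨h1, ?_⟩
  rw [← h1, ← sol_iff (1 - α) (-α) (-((c - ct) + α * ct))]
  constructor
  · rintro ⟨x, y, z, hnt, heq⟩
    exact ⟨x, y, z, hnt, by linear_combination heq⟩
  · rintro ⟨x, y, z, hnt, heq⟩
    exact ⟨x, y, z, hnt, by linear_combination heq⟩
end
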